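/- arXiv:2305.01354 — 3 statements merged into one kernel-verified Lean document; each statement's English description precedes it below -/
import Mathlib

section
/- Let (b,c) be a locally finite and connected graph over X with a cocompact group action G such that H_{b,c} is G-invariant, and fix x₀ ∈ X. Then 𝓜 = ex (closure of the convex hull of 𝓜), where the closure is taken in the product topology on ℝ^X. -/
open MeasureTheory
open scoped BigOperators

noncomputable section

namespace GraphPaper

variable {X : Type*}

/-- The Schrödinger operator `H_{b,c}` of a graph `(b,c)` over `X`. -/
def schrodinger (b : X → X → ℝ) (c : X → ℝ) (f : X → ℝ) : X → ℝ :=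
  fun x => (∑' y, b x y * (f x - f y)) + c x * f x

/-- Membership of `f` in the domain of `H_{b,c}`. -/
def InDom (b : X → X → ℝ) (f : X → ℝ) : Prop :=
  ∀ x, Summable fun y => b x y * |f y|

/-- The graph `b` is connected: any two points are joined by a path of positive weights. -/
def Connected (b : X → X → ℝ) : Prop :=
  ∀ x y : X, Relation.ReflTransGen (fun u v => 0 < b u v) x y

/-- The degree `deg(x) = ∑_y b(x,y) + c(x)`. -/
def deg (b : X → X → ℝ) (c : X → ℝ) (x : X) : ℝ :=
  (∑' y, b x y) + c x

variable {G : Type*} [Group G] [MulAction G X]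

/-- The shift `T_g f (x) = f (g⁻¹ x)`. -/
def shift (g : G) (f : X → ℝ) : X → ℝ := fun x => f (g⁻¹ • x)

/-- `H_{b,c}` is invariant under the shifts by elements of a set `R ⊆ G`. -/
def HInvOn (b : X → X → ℝ) (c : X → ℝ) (R : Set G) : Prop :=
  ∀ g ∈ R, ∀ f : X → ℝ, InDom b f →
    InDom b (shift g f) ∧ schrodinger b c (shift g f) = shift g (schrodinger b c f)

/-- The action of `G` on `X` is cocompact: there is a finite `V` with `G V = X`. -/
def CocompactAction (G X : Type*) [Group G] [MulAction G X] : Prop :=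
  ∃ V : Finset X, ∀ x : X, ∃ g : G, ∃ v ∈ V, x = g • v

/-- The set `𝓗⁺` of nonnegative, not identically zero, harmonic functions. -/
def Hplus (b : X → X → ℝ) (c : X → ℝ) : Set (X → ℝ) :=
  {f | InDom b f ∧ schrodinger b c f = 0 ∧ (∀ x, 0 ≤ f x) ∧ f ≠ 0}

/-- The set `𝓚`: the closure of the normalized positive harmonic functions. -/
def Kset (b : X → X → ℝ) (c : X → ℝ) (x₀ : X) : Set (X → ℝ) :=
  closure {f : X → ℝ | f ∈ Hplus b c ∧ f x₀ = 1}

/-- The set `𝓚^R` of `R`-invariant elements of `𝓚`. -/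
def KsetR (b : X → X → ℝ) (c : X → ℝ) (x₀ : X) (R : Set G) : Set (X → ℝ) :=
  {f ∈ Kset b c x₀ | ∀ g ∈ R, shift g f = f}

/-- `f` is `G`-multiplicative with a character `γ ∈ Hom(G, ℝ_{>0})`. -/
def IsMultiplicative (G : Type*) [Group G] [MulAction G X] (f : X → ℝ) : Prop :=
  ∃ γ : G →* ℝ, (∀ g, 0 < γ g) ∧ ∀ g : G, shift g f = γ g⁻¹ • f

/-- `Q(R) = π⁻¹(Z(G/R))`, the preimage of the centre of `G/R`. -/
def Qsub (R : Subgroup G) [R.Normal] : Subgroup G :=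
  (Subgroup.center (G ⧸ R)).comap (QuotientGroup.mk' R)

/-- The set `𝓜` of multiplicative elements of `𝓚`. -/
def Mset (G : Type*) [Group G] [MulAction G X] (b : X → X → ℝ) (c : X → ℝ) (x₀ : X) :
    Set (X → ℝ) :=
  {f ∈ Kset b c x₀ | IsMultiplicative G f}

/-- The set `𝓚_λ` for the graph `(b, c - λ)`, i.e. for `λ`-harmonic functions. -/
def KsetLam (b : X → X → ℝ) (c : X → ℝ) (x₀ : X) (l : ℝ) : Set (X → ℝ) :=
  closure {f : X → ℝ | InDom b f ∧ (schrodinger b c f = fun x => l * f x) ∧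
    (∀ x, 0 ≤ f x) ∧ f ≠ 0 ∧ f x₀ = 1}

/-- The set `𝓜_λ` of multiplicative elements of `𝓚_λ`. -/
def MsetLam (G : Type*) [Group G] [MulAction G X] (b : X → X → ℝ) (c : X → ℝ) (x₀ : X)
    (l : ℝ) : Set (X → ℝ) :=
  {f ∈ KsetLam b c x₀ l | IsMultiplicative G f}

/-!
Nonnegative harmonic functions normalized at `x₀` form a closed convex set that the Harnack
inequality along paths confines to a compact box, so `𝓜` and the closed convex hull `C` of `𝓜`
are compact and Milman's theorem gives `ex C ⊆ 𝓜`. Conversely, for `f ∈ 𝓜` with character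
`γ`, each `w ↦ w (g • g • x₀) - 2 γ(g) w (g • x₀) + γ(g)² w x₀` is a linear functional that
is nonnegative on `C` and vanishes at `f`; it therefore vanishes at both ends of any segment of
`C` through `f`, and a quadratic inequality valid on `C` shows that such an end transforms with
the same character `γ`. Two positive harmonic functions with the same character coincide, since
by cocompactness the ratio of the two attains its minimum and the minimum principle applies.
-/

end GraphPaper

open Set

section Milman

variable {E : Type*} [AddCommGroup E] [Module ℝ E]

theorem convexJoin_eq_image (s t : Set E) :
    convexJoin ℝ s t =
      (fun p : E × E × ℝ => (1 - p.2.2) • p.1 + p.2.2 • p.2.1) '' (s ×ˢ t ×ˢ Icc 0 1) := by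
  ext z
  simp only [convexJoin, segment_eq_image, mem_iUnion, mem_image, Prod.exists, mem_prod,
    exists_prop]
  constructor
  · rintro ⟨x, hx, y, hy, θ, hθ, rfl⟩
    exact ⟨x, y, θ, ⟨hx, hy, hθ⟩, rfl⟩
  · rintro ⟨x, y, θ, ⟨hx, hy, hθ⟩, rfl⟩
    exact ⟨x, hx, y, hy, θ, hθ, rfl⟩

variable [TopologicalSpace E]

theorem sq_le_of_mem_closure_convexHull (ℓ₁ ℓ₂ : E →L[ℝ] ℝ) {S : Set E}
    (hS : ∀ w ∈ S, ℓ₁ w ^ 2 ≤ ℓ₂ w) {w : E} (hw : w ∈ closure (convexHull ℝ S)) :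
    ℓ₁ w ^ 2 ≤ ℓ₂ w := by
  have hconv : ConvexOn ℝ univ fun w => ℓ₁ w ^ 2 - ℓ₂ w :=
    ((even_two.convexOn_pow (𝕜 := ℝ)).comp_linearMap ℓ₁.toLinearMap).sub
      (ℓ₂.toLinearMap.concaveOn convex_univ)
  have hclosed : IsClosed {w | ℓ₁ w ^ 2 - ℓ₂ w ≤ 0} :=
    isClosed_le (by fun_prop) continuous_const
  have hsub : S ⊆ {w | ℓ₁ w ^ 2 - ℓ₂ w ≤ 0} := fun w hw => sub_nonpos.2 (hS w hw)
  exact sub_nonpos.1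
    (closure_minimal (convexHull_min hsub (by simpa using hconv.convex_le 0)) hclosed hw)

variable [IsTopologicalAddGroup E] [ContinuousSMul ℝ E]

theorem IsCompact.convexJoin {s t : Set E} (hs : IsCompact s) (ht : IsCompact t) :
    IsCompact (convexJoin ℝ s t) := by
  rw [convexJoin_eq_image]
  exact (hs.prod (ht.prod isCompact_Icc)).image (by fun_prop)

theorem IsCompact.convexHull_union {s t : Set E} (hs : IsCompact s) (ht : IsCompact t)
    (hsc : Convex ℝ s) (htc : Convex ℝ t) : IsCompact (convexHull ℝ (s ∪ t)) := by
  rcases s.eq_empty_or_nonempty with rfl | hs₀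
  · simpa [htc.convexHull_eq] using ht
  rcases t.eq_empty_or_nonempty with rfl | ht₀
  · simpa [hsc.convexHull_eq] using hs
  rw [hsc.convexHull_union htc hs₀ ht₀]
  exact hs.convexJoin ht

theorem isCompact_convexHull_biUnion {ι : Type*} (T : Finset ι) {K : ι → Set E}
    (hK : ∀ i ∈ T, IsCompact (K i)) (hKc : ∀ i ∈ T, Convex ℝ (K i)) :
    IsCompact (convexHull ℝ (⋃ i ∈ T, K i)) := by
  classical
  induction T using Finset.induction with
  | empty => simp
  | insert a T _ ih =>
    rw [Finset.set_biUnion_insert, ← convexHull_convexHull_union_right]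
    exact (hK a (T.mem_insert_self a)).convexHull_union
      (ih (fun i hi => hK i (T.mem_insert_of_mem hi)) fun i hi => hKc i (T.mem_insert_of_mem hi))
      (hKc a (T.mem_insert_self a)) (convex_convexHull ℝ _)

/-- Milman's converse of the Krein–Milman theorem. -/
theorem extremePoints_closure_convexHull_subset [LocallyConvexSpace ℝ E] [T2Space E]
    {s : Set E} (hs : IsCompact s) (hC : IsCompact (closure (convexHull ℝ s))) :
    (closure (convexHull ℝ s)).extremePoints ℝ ⊆ s := by
  intro x hx
  by_contra hxs
  obtain ⟨V, hV, hsV⟩ := compact_open_separated_add_right hs isOpen_compl_singleton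
    (fun p hp (hpx : p = x) => hxs (hpx ▸ hp))
  obtain ⟨V₁, hV₁, hV₁closed, hV₁V⟩ := exists_mem_nhds_isClosed_subset hV
  obtain ⟨W, ⟨hW0, hWopen, hWconv⟩, hWV₁⟩ :=
    (LocallyConvexSpace.convex_open_basis_zero ℝ E).mem_iff.mp hV₁
  obtain ⟨T, hTs, hsT⟩ := hs.elim_nhds_subcover (fun p => (p + ·) '' W)
    fun p _ => ((Homeomorph.addLeft p).isOpenMap _ hWopen).mem_nhds ⟨0, hW0, add_zero p⟩
  -- Each piece of `s` near `p` has its closed convex hull inside `p + V`, which misses `x`.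
  set K : E → Set E := fun p => closure (convexHull ℝ (s ∩ (p + ·) '' W))
  have hKC : ∀ p, K p ⊆ closure (convexHull ℝ s) :=
    fun p => closure_mono (convexHull_mono inter_subset_left)
  have hxK : ∀ p ∈ T, x ∉ K p := by
    intro p hp hxp
    have hK : K p ⊆ (p + ·) '' V₁ :=
      closure_minimal ((convexHull_min (fun z hz => hz.2) (hWconv.translate p)).trans
        (image_mono hWV₁)) ((Homeomorph.addLeft p).isClosedMap _ hV₁closed)
    obtain ⟨w, hw, rfl⟩ := hK hxp
    exact hsV ⟨p, hTs p hp, w, hV₁V hw, rfl⟩ rfl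
  set J := convexHull ℝ (⋃ p ∈ T, K p)
  have hJ : IsCompact J := isCompact_convexHull_biUnion T
    (fun p _ => hC.of_isClosed_subset isClosed_closure (hKC p))
    (fun p _ => (convex_convexHull ℝ _).closure)
  have hCJ : closure (convexHull ℝ s) ⊆ J := by
    refine closure_minimal (convexHull_min (fun z hz => ?_) (convex_convexHull ℝ _)) hJ.isClosed
    obtain ⟨p, hp, hzp⟩ := mem_iUnion₂.mp (hsT hz)
    exact subset_convexHull ℝ _ (mem_biUnion hp (subset_closure (subset_convexHull ℝ _ ⟨hz, hzp⟩)))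
  -- `x` is extreme, so removing it leaves a convex set, which then contains `J ∋ x`.
  have hJx : J ⊆ closure (convexHull ℝ s) \ {x} := by
    refine convexHull_min (fun z hz => ?_)
      (((convex_convexHull ℝ s).closure.mem_extremePoints_iff_convex_sdiff).1 hx).2
    obtain ⟨p, hp, hzp⟩ := mem_iUnion₂.mp hz
    exact ⟨hKC p hzp, fun hzx => hxK p hp (hzx ▸ hzp)⟩
  exact (hJx (hCJ hx.1)).2 rfl

end Milman

namespace GraphPaper

variable {X : Type*} {b : X → X → ℝ} {c : X → ℝ}

theorem schrodinger_apply_eq_sum (hb0 : ∀ x y, 0 ≤ b x y) (hlf : ∀ x, {y | 0 < b x y}.Finite)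
    (f : X → ℝ) (x : X) :
    schrodinger b c f x = deg b c x * f x - ∑ y ∈ (hlf x).toFinset, b x y * f y := by
  have htsum : ∀ φ : X → ℝ, ∑' y, b x y * φ y = ∑ y ∈ (hlf x).toFinset, b x y * φ y :=
    fun φ => tsum_eq_sum fun y hy => by
      rw [le_antisymm (by simpa using hy) (hb0 x y), zero_mul]
  have hb1 := htsum 1
  have hbf : ∑' y, b x y * (f x - f y) = ∑ y ∈ (hlf x).toFinset, b x y * (f x - f y) := htsum _
  simp only [Pi.one_apply, mul_one] at hb1
  rw [schrodinger, deg, hbf, hb1]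
  simp only [mul_sub, Finset.sum_sub_distrib, add_mul, Finset.sum_mul]
  ring

theorem continuous_schrodinger_apply (hb0 : ∀ x y, 0 ≤ b x y)
    (hlf : ∀ x, {y | 0 < b x y}.Finite) (x : X) : Continuous fun f => schrodinger b c f x := by
  simp only [schrodinger_apply_eq_sum hb0 hlf]
  fun_prop

theorem schrodinger_smul_add_smul (hb0 : ∀ x y, 0 ≤ b x y) (hlf : ∀ x, {y | 0 < b x y}.Finite)
    (s t : ℝ) (f g : X → ℝ) (x : X) :
    schrodinger b c (s • f + t • g) x = s * schrodinger b c f x + t * schrodinger b c g x := by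
  simp only [schrodinger_apply_eq_sum hb0 hlf, Pi.add_apply, Pi.smul_apply, smul_eq_mul,
    mul_add, mul_sub, Finset.sum_add_distrib, Finset.mul_sum]
  ring_nf

def normalizedHarmonic (b : X → X → ℝ) (c : X → ℝ) (x₀ : X) : Set (X → ℝ) :=
  {f | (∀ x, schrodinger b c f x = 0) ∧ (∀ x, 0 ≤ f x) ∧ f x₀ = 1}

theorem isClosed_normalizedHarmonic (hb0 : ∀ x y, 0 ≤ b x y)
    (hlf : ∀ x, {y | 0 < b x y}.Finite) (x₀ : X) : IsClosed (normalizedHarmonic b c x₀) := by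
  simp only [normalizedHarmonic, Set.ofPred_and, Set.ofPred_forall]
  exact (isClosed_iInter fun x => isClosed_eq (continuous_schrodinger_apply hb0 hlf x)
    continuous_const).inter ((isClosed_iInter fun x => isClosed_le continuous_const
      (continuous_apply x)).inter (isClosed_eq (continuous_apply x₀) continuous_const))

theorem convex_normalizedHarmonic (hb0 : ∀ x y, 0 ≤ b x y) (hlf : ∀ x, {y | 0 < b x y}.Finite)
    (x₀ : X) : Convex ℝ (normalizedHarmonic b c x₀) := by
  rintro f ⟨hf, hf0, hf1⟩ g ⟨hg, hg0, hg1⟩ s t hs ht hst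
  refine ⟨fun x => ?_, fun x => ?_, ?_⟩
  · rw [schrodinger_smul_add_smul hb0 hlf, hf, hg]
    ring
  · have := hf0 x
    have := hg0 x
    simp only [Pi.add_apply, Pi.smul_apply, smul_eq_mul]
    positivity
  · simp [hf1, hg1, hst]

theorem Kset_subset_normalizedHarmonic (hb0 : ∀ x y, 0 ≤ b x y)
    (hlf : ∀ x, {y | 0 < b x y}.Finite) (x₀ : X) :
    Kset b c x₀ ⊆ normalizedHarmonic b c x₀ :=
  closure_minimal (fun _ ⟨⟨_, hf, hf0, _⟩, hf1⟩ => ⟨congrFun hf, hf0, hf1⟩)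
    (isClosed_normalizedHarmonic hb0 hlf x₀)

theorem mul_le_deg_mul (hb0 : ∀ x y, 0 ≤ b x y) (hlf : ∀ x, {y | 0 < b x y}.Finite)
    {f : X → ℝ} {x y : X} (hf : schrodinger b c f x = 0) (hf0 : ∀ z, 0 ≤ f z) (hxy : 0 < b x y) :
    b x y * f y ≤ deg b c x * f x := by
  rw [schrodinger_apply_eq_sum hb0 hlf, sub_eq_zero] at hf
  rw [hf]
  exact Finset.single_le_sum (fun z _ => mul_nonneg (hb0 x z) (hf0 z)) (by simpa using hxy)

theorem eq_zero_of_harmonic_of_apply_eq_zero (hb0 : ∀ x y, 0 ≤ b x y)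
    (hlf : ∀ x, {y | 0 < b x y}.Finite) (hconn : Connected b) {f : X → ℝ}
    (hf : ∀ x, schrodinger b c f x = 0) (hf0 : ∀ x, 0 ≤ f x) {p : X} (hp : f p = 0) (x : X) :
    f x = 0 := by
  induction hconn p x with
  | refl => exact hp
  | tail _ hyz ih =>
    have := mul_le_deg_mul hb0 hlf (hf _) hf0 hyz
    rw [ih, mul_zero] at this
    exact le_antisymm (nonpos_of_mul_nonpos_right this hyz) (hf0 _)

theorem pos_of_mem_normalizedHarmonic (hb0 : ∀ x y, 0 ≤ b x y)
    (hlf : ∀ x, {y | 0 < b x y}.Finite) (hconn : Connected b) {x₀ : X} {f : X → ℝ}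
    (hf : f ∈ normalizedHarmonic b c x₀) (x : X) : 0 < f x := by
  refine (hf.2.1 x).lt_of_ne fun hx => ?_
  have := eq_zero_of_harmonic_of_apply_eq_zero hb0 hlf hconn hf.1 hf.2.1 hx.symm x₀
  rw [hf.2.2] at this
  exact one_ne_zero this

theorem bddAbove_eval_normalizedHarmonic (hb0 : ∀ x y, 0 ≤ b x y)
    (hlf : ∀ x, {y | 0 < b x y}.Finite) (hconn : Connected b) (x₀ x : X) :
    BddAbove ((fun f => f x) '' normalizedHarmonic b c x₀) := by
  induction hconn x₀ x with
  | refl => exact ⟨1, by rintro _ ⟨f, hf, rfl⟩; exact hf.2.2.le⟩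
  | @tail y z _ hyz ih =>
    obtain ⟨M, hM⟩ := ih
    refine ⟨|deg b c y| * M / b y z, ?_⟩
    rintro _ ⟨f, hf, rfl⟩
    have hfy : f y ≤ M := hM ⟨f, hf, rfl⟩
    rw [le_div_iff₀ hyz, mul_comm]
    calc b y z * f z ≤ deg b c y * f y := mul_le_deg_mul hb0 hlf (hf.1 y) hf.2.1 hyz
      _ ≤ |deg b c y| * f y := mul_le_mul_of_nonneg_right (le_abs_self _) (hf.2.1 y)
      _ ≤ |deg b c y| * M := mul_le_mul_of_nonneg_left hfy (abs_nonneg _)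

theorem isCompact_normalizedHarmonic (hb0 : ∀ x y, 0 ≤ b x y)
    (hlf : ∀ x, {y | 0 < b x y}.Finite) (hconn : Connected b) (x₀ : X) :
    IsCompact (normalizedHarmonic b c x₀) := by
  choose M hM using bddAbove_eval_normalizedHarmonic (c := c) hb0 hlf hconn x₀
  refine (isCompact_univ_pi fun x => isCompact_Icc (a := 0) (b := M x)).of_isClosed_subset
    (isClosed_normalizedHarmonic hb0 hlf x₀) fun f hf x _ => ⟨hf.2.1 x, hM x ⟨f, hf, rfl⟩⟩

/-- `h - m • f` is a nonnegative harmonic function with a zero, hence vanishes. -/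
theorem eq_of_smul_le_of_apply_eq (hb0 : ∀ x y, 0 ≤ b x y)
    (hlf : ∀ x, {y | 0 < b x y}.Finite) (hconn : Connected b) {x₀ : X} {f h : X → ℝ}
    (hf : f ∈ normalizedHarmonic b c x₀) (hh : h ∈ normalizedHarmonic b c x₀) {m : ℝ}
    (hle : ∀ x, m * f x ≤ h x) {v : X} (hv : h v = m * f v) : h = f := by
  have hzero := eq_zero_of_harmonic_of_apply_eq_zero (f := (1 : ℝ) • h + (-m) • f) hb0 hlf hconn
    (fun x => by rw [schrodinger_smul_add_smul hb0 hlf, hf.1, hh.1]; ring)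
    (fun x => by simpa [sub_nonneg, ← sub_eq_add_neg] using hle x)
    (p := v) (by simp [hv])
  have hm : m = 1 := by
    have := hzero x₀
    simp only [hf.2.2, hh.2.2, Pi.add_apply, Pi.smul_apply, smul_eq_mul] at this
    linarith
  funext x
  simpa [hm, ← sub_eq_add_neg, sub_eq_zero] using hzero x

/-- For `f x₀ = 1` this says that `f` is `G`-multiplicative, with character `g ↦ f (g • x₀)`. -/
def multiplicativeSet (G : Type*) [Group G] [MulAction G X] (x₀ : X) : Set (X → ℝ) :=
  {f | ∀ (g : G) (x : X), f (g • x) = f (g • x₀) * f x}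

variable {G : Type*} [Group G] [MulAction G X]

theorem isClosed_multiplicativeSet (x₀ : X) : IsClosed (multiplicativeSet G x₀) := by
  simp only [multiplicativeSet, Set.ofPred_forall]
  exact isClosed_iInter fun g => isClosed_iInter fun x => isClosed_eq (continuous_apply _)
    ((continuous_apply (g • x₀)).mul (continuous_apply x))

theorem Mset_eq_Kset_inter (hb0 : ∀ x y, 0 ≤ b x y) (hlf : ∀ x, {y | 0 < b x y}.Finite)
    (hconn : Connected b) (x₀ : X) :
    Mset G b c x₀ = Kset b c x₀ ∩ multiplicativeSet G x₀ := by
  ext f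
  refine and_congr_right fun hfK => ?_
  have hf := Kset_subset_normalizedHarmonic hb0 hlf x₀ hfK
  constructor
  · rintro ⟨γ, -, hγ⟩ g x
    have hγf : ∀ y, f (g • y) = γ g * f y := fun y => by
      simpa [shift] using congrFun (hγ g⁻¹) y
    rw [hγf, hγf, hf.2.2, mul_one]
  · intro hfG
    refine ⟨⟨⟨fun g => f (g • x₀), by simpa using hf.2.2⟩, fun g h => ?_⟩,
      fun g => pos_of_mem_normalizedHarmonic hb0 hlf hconn hf _, fun g => funext fun x => ?_⟩
    · simp only [mul_smul]
      exact hfG g (h • x₀)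
    · simpa [shift] using hfG g⁻¹ x

theorem eq_of_eqOn_orbit (hb0 : ∀ x y, 0 ≤ b x y) (hlf : ∀ x, {y | 0 < b x y}.Finite)
    (hconn : Connected b) (hcocpt : CocompactAction G X) {x₀ : X} {f h : X → ℝ}
    (hf : f ∈ normalizedHarmonic b c x₀) (hh : h ∈ normalizedHarmonic b c x₀)
    (hfG : f ∈ multiplicativeSet G x₀) (hhG : h ∈ multiplicativeSet G x₀)
    (horb : ∀ g : G, h (g • x₀) = f (g • x₀)) : h = f := by
  obtain ⟨V, hV⟩ := hcocpt
  have hfpos := pos_of_mem_normalizedHarmonic hb0 hlf hconn hf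
  -- Cocompactness makes the ratio `h / f`, which is `G`-invariant, attain its minimum.
  obtain ⟨v, hv, hmin⟩ := V.exists_min_image (fun v => h v / f v)
    (let ⟨_, v, hv, _⟩ := hV x₀; ⟨v, hv⟩)
  refine eq_of_smul_le_of_apply_eq hb0 hlf hconn hf hh (m := h v / f v) (fun x => ?_)
    (div_mul_cancel₀ _ (hfpos v).ne').symm
  obtain ⟨g, w, hw, rfl⟩ := hV x
  rw [hfG, hhG, horb, mul_left_comm]
  refine mul_le_mul_of_nonneg_left ?_ (hfpos _).le
  exact (le_div_iff₀ (hfpos w)).1 (hmin w hw)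

/-- A linear functional in `w` that equals `(w (g • x₀) - q) ^ 2` on multiplicative `w` with
`w x₀ = 1`. -/
def orbitDefect (x₀ : X) (g : G) (q : ℝ) : (X → ℝ) →L[ℝ] ℝ :=
  ContinuousLinearMap.proj (g • g • x₀) - (2 * q) • ContinuousLinearMap.proj (g • x₀) +
    q ^ 2 • ContinuousLinearMap.proj x₀

theorem orbitDefect_apply (x₀ : X) (g : G) (q : ℝ) (w : X → ℝ) :
    orbitDefect x₀ g q w = w (g • g • x₀) - 2 * q * w (g • x₀) + q ^ 2 * w x₀ := by
  simp [orbitDefect, mul_assoc]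

theorem orbitDefect_eq_sq {x₀ : X} {w : X → ℝ} (hw : w ∈ multiplicativeSet G x₀)
    (hw₀ : w x₀ = 1) (g : G) (q : ℝ) : orbitDefect x₀ g q w = (w (g • x₀) - q) ^ 2 := by
  rw [orbitDefect_apply, hw g (g • x₀), hw₀]
  ring

theorem sq_le_mul_orbitDefect {x₀ : X} {S : Set (X → ℝ)}
    (hS : ∀ h ∈ S, h ∈ multiplicativeSet G x₀ ∧ h x₀ = 1) {x : X} {K : ℝ}
    (hK : ∀ h ∈ S, h x ^ 2 ≤ K) (g : G) (q : ℝ) {w : X → ℝ}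
    (hw : w ∈ closure (convexHull ℝ S)) :
    (w (g • x) - q * w x) ^ 2 ≤ K * orbitDefect x₀ g q w := by
  have := sq_le_of_mem_closure_convexHull
    (ContinuousLinearMap.proj (g • x) - q • ContinuousLinearMap.proj x) (K • orbitDefect x₀ g q)
    (fun h hh => ?_) hw
  · simpa using this
  obtain ⟨hG, h₀⟩ := hS h hh
  have hsq : (h (g • x) - q * h x) ^ 2 = (h (g • x₀) - q) ^ 2 * h x ^ 2 := by
    rw [hG]
    ring
  simpa [hsq, orbitDefect_eq_sq hG h₀, mul_comm K] using
    mul_le_mul_of_nonneg_left (hK h hh) (sq_nonneg (h (g • x₀) - q))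

/-- The functional `orbitDefect x₀ g (f (g • x₀))` is nonnegative on the closed convex hull and
vanishes at `f`, hence at `u`. -/
theorem apply_smul_eq_of_mem_openSegment {x₀ : X} {S : Set (X → ℝ)}
    (hS : ∀ h ∈ S, h ∈ multiplicativeSet G x₀ ∧ h x₀ = 1) (hK : ∀ x, ∃ K, ∀ h ∈ S, h x ^ 2 ≤ K)
    {f u v : X → ℝ} (hf : f ∈ S) (hu : u ∈ closure (convexHull ℝ S))
    (hv : v ∈ closure (convexHull ℝ S)) (hfuv : f ∈ openSegment ℝ u v) (g : G) (x : X) :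
    u (g • x) = f (g • x₀) * u x := by
  set q := f (g • x₀)
  have hbound : ∀ x, ∃ K > 0, ∀ w ∈ closure (convexHull ℝ S),
      (w (g • x) - q * w x) ^ 2 ≤ K * orbitDefect x₀ g q w := fun x =>
    let ⟨K, hK⟩ := hK x
    ⟨max K 1, by positivity, fun w hw => sq_le_mul_orbitDefect hS
      (fun h hh => (hK h hh).trans (le_max_left K 1)) g q hw⟩
  have hnonneg : ∀ w ∈ closure (convexHull ℝ S), 0 ≤ orbitDefect x₀ g q w := fun w hw =>
    let ⟨K, hK₀, hK⟩ := hbound x₀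
    nonneg_of_mul_nonneg_right ((sq_nonneg _).trans (hK w hw)) hK₀
  obtain ⟨a, a', ha, ha', -, hf_eq⟩ := hfuv
  have hsum : a * orbitDefect x₀ g q u + a' * orbitDefect x₀ g q v = 0 := by
    rw [← smul_eq_mul, ← smul_eq_mul, ← map_smul, ← map_smul, ← map_add, hf_eq,
      orbitDefect_eq_sq (hS f hf).1 (hS f hf).2, sub_self, sq, zero_mul]
  have hu₀ : orbitDefect x₀ g q u = 0 :=
    ((mul_eq_zero.1 ((add_eq_zero_iff_of_nonneg (mul_nonneg ha.le (hnonneg u hu))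
      (mul_nonneg ha'.le (hnonneg v hv))).1 hsum).1).resolve_left ha.ne')
  obtain ⟨K, -, hK⟩ := hbound x
  have := hK u hu
  rw [hu₀, mul_zero] at this
  exact sub_eq_zero.1 (pow_eq_zero_iff two_ne_zero |>.1 (le_antisymm this (sq_nonneg _)))

theorem Mset_subset_normalizedHarmonic (hb0 : ∀ x y, 0 ≤ b x y)
    (hlf : ∀ x, {y | 0 < b x y}.Finite) (x₀ : X) :
    Mset G b c x₀ ⊆ normalizedHarmonic b c x₀ :=
  fun _ hf => Kset_subset_normalizedHarmonic hb0 hlf x₀ hf.1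

theorem closure_convexHull_Mset_subset (hb0 : ∀ x y, 0 ≤ b x y)
    (hlf : ∀ x, {y | 0 < b x y}.Finite) (x₀ : X) :
    closure (convexHull ℝ (Mset G b c x₀)) ⊆ normalizedHarmonic b c x₀ :=
  closure_minimal (convexHull_min (Mset_subset_normalizedHarmonic hb0 hlf x₀)
    (convex_normalizedHarmonic hb0 hlf x₀)) (isClosed_normalizedHarmonic hb0 hlf x₀)

theorem Mset_subset_extremePoints (hb0 : ∀ x y, 0 ≤ b x y) (hlf : ∀ x, {y | 0 < b x y}.Finite)
    (hconn : Connected b) (hcocpt : CocompactAction G X) (x₀ : X) :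
    Mset G b c x₀ ⊆ (closure (convexHull ℝ (Mset G b c x₀))).extremePoints ℝ := by
  have hN := Mset_subset_normalizedHarmonic (G := G) (c := c) hb0 hlf x₀
  have hS : ∀ h ∈ Mset G b c x₀, h ∈ multiplicativeSet G x₀ ∧ h x₀ = 1 := fun h hh =>
    ⟨(Mset_eq_Kset_inter (G := G) (c := c) hb0 hlf hconn x₀ ▸ hh).2, (hN hh).2.2⟩
  have hK : ∀ x, ∃ K, ∀ h ∈ Mset G b c x₀, h x ^ 2 ≤ K := fun x =>
    let ⟨M, hM⟩ := bddAbove_eval_normalizedHarmonic (c := c) hb0 hlf hconn x₀ x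
    ⟨M ^ 2, fun h hh => pow_le_pow_left₀ ((hN hh).2.1 x) (hM ⟨h, hN hh, rfl⟩) 2⟩
  intro f hf
  refine mem_extremePoints_iff_left.2 ⟨subset_closure (subset_convexHull ℝ _ hf),
    fun u hu v hv hfuv => ?_⟩
  have huN := closure_convexHull_Mset_subset (G := G) (c := c) hb0 hlf x₀ hu
  have hug := apply_smul_eq_of_mem_openSegment hS hK hf hu hv hfuv
  have horb : ∀ g : G, u (g • x₀) = f (g • x₀) := fun g => by rw [hug, huN.2.2, mul_one]
  exact eq_of_eqOn_orbit hb0 hlf hconn hcocpt (hN hf) huN (hS f hf).1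
    (fun g x => by rw [hug, horb]) horb

theorem extremePoints_subset_Mset (hb0 : ∀ x y, 0 ≤ b x y) (hlf : ∀ x, {y | 0 < b x y}.Finite)
    (hconn : Connected b) (x₀ : X) :
    (closure (convexHull ℝ (Mset G b c x₀))).extremePoints ℝ ⊆ Mset G b c x₀ := by
  have hN := isCompact_normalizedHarmonic (c := c) hb0 hlf hconn x₀
  refine extremePoints_closure_convexHull_subset (hN.of_isClosed_subset ?_
    (Mset_subset_normalizedHarmonic hb0 hlf x₀))
    (hN.of_isClosed_subset isClosed_closure (closure_convexHull_Mset_subset hb0 hlf x₀))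
  rw [Mset_eq_Kset_inter hb0 hlf hconn x₀]
  exact isClosed_closure.inter (isClosed_multiplicativeSet x₀)

theorem Mset_eq_extremePoints_closure_convexHull_general {X : Type*} {G : Type*}
    [Group G] [MulAction G X]
    (b : X → X → ℝ) (c : X → ℝ)
    (hb0 : ∀ x y, 0 ≤ b x y)
    (hlf : ∀ x : X, {y | 0 < b x y}.Finite) (hconn : Connected b)
    (hcocpt : CocompactAction G X) (x₀ : X) :
    Mset G b c x₀ = Set.extremePoints ℝ (closure (convexHull ℝ (Mset G b c x₀))) :=
  (Mset_subset_extremePoints hb0 hlf hconn hcocpt x₀).antisymm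
    (extremePoints_subset_Mset hb0 hlf hconn x₀)

/-- `𝓜 = ex (closure (convexHull 𝓜))`. -/
theorem Mset_eq_extremePoints_closure_convexHull {X : Type*} [Countable X] {G : Type*}
    [Group G] [MulAction G X]
    (b : X → X → ℝ) (c : X → ℝ)
    (hb0 : ∀ x y, 0 ≤ b x y) (hbd : ∀ x, b x x = 0) (hbs : ∀ x, Summable (b x))
    (hlf : ∀ x : X, {y | 0 < b x y}.Finite) (hconn : Connected b)
    (hcocpt : CocompactAction G X)
    (hH : HInvOn b c (Set.univ : Set G)) (x₀ : X) :
    Mset G b c x₀ = Set.extremePoints ℝ (closure (convexHull ℝ (Mset G b c x₀))) :=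
  Mset_eq_extremePoints_closure_convexHull_general b c hb0 hlf hconn hcocpt x₀

end GraphPaper
end
end

section
/- Let (b,c) be a locally finite connected graph over X with a nilpotent cocompact group action G such that H_{b,c} is G-invariant. Then there exists a normal subgroup R ⊆ G such that: every f ∈ 𝓗⁺_λ for every λ ∈ ℝ is R-invariant; R contains the stabiliser Stab(x) = {g ∈ G : gx = x} of every x ∈ X; and G/R is isomorphic to ℤ^d for some d ∈ ℕ₀. -/
/-!
For each `λ`, the nonnegative `λ`-eigenfunctions normalised at a base point `x₀` form a compact
convex set: along each edge `b x y f y ≤ (deg x - λ) f x`, which bounds `f y` by a multiple of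
`f x₀` independent of `f`. By Krein–Milman, an element of `G` fixing the extreme points fixes every
nonnegative `λ`-eigenfunction; `R` is the subgroup of such elements.

If a normal subgroup `N` fixes an extreme point `e` and `g` is central modulo `N`, then
`e (g⁻¹ h v) = e (h g⁻¹ v) ≤ K e (h v)` for `v` in a finite fundamental domain, and since `e` spans
an extreme ray of the cone, `T_g e = γ e`. For `g` in a stabiliser the powers `γ ^ n` stay bounded;
for a commutator `⁅a, w⁆` central modulo `N`, `γ ^ (n * n)` is the value at `x₀` of a word of length
`4 n`, so grows at most exponentially in `n`. Either way `γ ≤ 1`, and applying this to `g⁻¹` gives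
`γ = 1`. Descending the lower central series yields `G' ≤ R`; the multipliers also show that `G/R`
is torsion free. It is finitely generated because `G` is generated by the elements carrying a finite
fundamental domain to itself or to its neighbours, and these lie in finitely many cosets of the
stabilisers. Hence `G/R ≅ ℤ^d`.
-/

open MeasureTheory
open scoped BigOperators

noncomputable section

namespace GraphPaper

variable {X : Type*}

variable {G : Type*} [Group G] [MulAction G X]

open scoped commutatorElement

theorem shift_mul (g h : G) (f : X → ℝ) : shift (g * h) f = shift g (shift h f) := by
  funext x
  simp [shift, mul_smul]

theorem shift_one (f : X → ℝ) : shift (1 : G) f = f := by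
  funext x
  simp [shift]

theorem shift_pow_of_shift_eq_smul {g : G} {f : X → ℝ} {γ : ℝ} (h : shift g f = γ • f) (n : ℕ) :
    shift (g ^ n) f = γ ^ n • f := by
  induction n with
  | zero => rw [pow_zero, pow_zero, one_smul, shift_one]
  | succ n ih =>
    rw [pow_succ', shift_mul, ih, pow_succ, mul_smul, ← h]
    rfl

theorem shift_single [DecidableEq X] (g : G) (y : X) :
    shift g (Pi.single y (1 : ℝ)) = Pi.single (g • y) 1 := by
  funext z
  simp [shift, Pi.single_apply, inv_smul_eq_iff]

theorem schrodinger_single_of_ne [DecidableEq X] (b : X → X → ℝ) (c : X → ℝ) {x y : X}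
    (hxy : x ≠ y) :
    schrodinger b c (Pi.single y 1) x = -b x y := by
  simp only [schrodinger, Pi.single_eq_of_ne hxy, zero_sub, mul_neg, tsum_neg, mul_zero, add_zero]
  rw [tsum_eq_single y fun z hz => by simp [Pi.single_eq_of_ne hz]]
  simp

structure IsLocallyFiniteGraph (b : X → X → ℝ) : Prop where
  nonneg : ∀ x y, 0 ≤ b x y
  finite_nbrs : ∀ x, {y | 0 < b x y}.Finite

namespace IsLocallyFiniteGraph

variable {b : X → X → ℝ}

def nbrs (hb : IsLocallyFiniteGraph b) (x : X) : Finset X := (hb.finite_nbrs x).toFinset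

theorem mem_nbrs (hb : IsLocallyFiniteGraph b) {x y : X} : y ∈ hb.nbrs x ↔ 0 < b x y := by
  simp [nbrs]

theorem tsum_mul_eq_sum (hb : IsLocallyFiniteGraph b) (x : X) (f : X → ℝ) :
    ∑' y, b x y * f y = ∑ y ∈ hb.nbrs x, b x y * f y :=
  tsum_eq_sum fun y hy => by
    rw [(hb.nonneg x y).eq_of_not_lt' fun h => hy (hb.mem_nbrs.2 h), zero_mul]

theorem summable_mul (hb : IsLocallyFiniteGraph b) (x : X) (f : X → ℝ) :
    Summable fun y => b x y * f y :=
  summable_of_ne_finset_zero (s := hb.nbrs x) fun y hy => by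
    rw [(hb.nonneg x y).eq_of_not_lt' fun h => hy (hb.mem_nbrs.2 h), zero_mul]

theorem inDom (hb : IsLocallyFiniteGraph b) (f : X → ℝ) : InDom b f := fun x => hb.summable_mul x _

theorem schrodinger_apply (hb : IsLocallyFiniteGraph b) (c : X → ℝ) (f : X → ℝ) (x : X) :
    schrodinger b c f x = deg b c x * f x - ∑ y ∈ hb.nbrs x, b x y * f y := by
  simp only [schrodinger, deg, mul_sub]
  rw [(hb.summable_mul x fun _ => f x).tsum_sub (hb.summable_mul x f), tsum_mul_right,
    hb.tsum_mul_eq_sum]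
  ring

theorem schrodinger_add (hb : IsLocallyFiniteGraph b) (c : X → ℝ) (f g : X → ℝ) :
    schrodinger b c (f + g) = schrodinger b c f + schrodinger b c g := by
  funext x
  simp only [hb.schrodinger_apply, Pi.add_apply, mul_add, Finset.sum_add_distrib]
  ring

theorem schrodinger_smul (hb : IsLocallyFiniteGraph b) (c : X → ℝ) (a : ℝ) (f : X → ℝ) :
    schrodinger b c (a • f) = a • schrodinger b c f := by
  funext x
  simp only [hb.schrodinger_apply, Pi.smul_apply, smul_eq_mul, mul_sub, Finset.mul_sum,
    mul_left_comm]

theorem schrodinger_sub (hb : IsLocallyFiniteGraph b) (c : X → ℝ) (f g : X → ℝ) :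
    schrodinger b c (f - g) = schrodinger b c f - schrodinger b c g := by
  rw [sub_eq_add_neg, hb.schrodinger_add, ← neg_one_smul ℝ g, hb.schrodinger_smul, neg_one_smul,
    ← sub_eq_add_neg]

theorem continuous_schrodinger (hb : IsLocallyFiniteGraph b) (c : X → ℝ) :
    Continuous (schrodinger b c) :=
  continuous_pi fun x => by
    simp_rw [hb.schrodinger_apply]
    fun_prop

end IsLocallyFiniteGraph

theorem HInvOn.weight_smul {b : X → X → ℝ} {c : X → ℝ} (hH : HInvOn b c (Set.univ : Set G))
    (hb : IsLocallyFiniteGraph b) (hbd : ∀ x, b x x = 0) (g : G) (x y : X) :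
    b (g • x) (g • y) = b x y := by
  classical
  rcases eq_or_ne x y with rfl | hxy
  · rw [hbd, hbd]
  have h := congrFun (hH g trivial _ (hb.inDom (Pi.single y 1))).2 (g • x)
  rwa [shift_single, schrodinger_single_of_ne b c ((MulAction.injective g).ne hxy), shift,
    inv_smul_smul, schrodinger_single_of_ne b c hxy, neg_inj] at h

section EigenCone

variable {b : X → X → ℝ} {c : X → ℝ} {l : ℝ}

def eigenCone (b : X → X → ℝ) (c : X → ℝ) (l : ℝ) : Set (X → ℝ) :=
  {f | (∀ x, 0 ≤ f x) ∧ schrodinger b c f = l • f}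

def eigenBase (b : X → X → ℝ) (c : X → ℝ) (l : ℝ) (x₀ : X) : Set (X → ℝ) :=
  {f ∈ eigenCone b c l | f x₀ = 1}

theorem add_mem_eigenCone (hb : IsLocallyFiniteGraph b) {f g : X → ℝ} (hf : f ∈ eigenCone b c l)
    (hg : g ∈ eigenCone b c l) : f + g ∈ eigenCone b c l :=
  ⟨fun x => add_nonneg (hf.1 x) (hg.1 x), by rw [hb.schrodinger_add, hf.2, hg.2, smul_add]⟩

theorem smul_mem_eigenCone (hb : IsLocallyFiniteGraph b) {f : X → ℝ} {a : ℝ} (ha : 0 ≤ a)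
    (hf : f ∈ eigenCone b c l) : a • f ∈ eigenCone b c l :=
  ⟨fun x => mul_nonneg ha (hf.1 x), by rw [hb.schrodinger_smul, hf.2, smul_comm]⟩

theorem sub_mem_eigenCone (hb : IsLocallyFiniteGraph b) {f g : X → ℝ} (hf : f ∈ eigenCone b c l)
    (hg : g ∈ eigenCone b c l) (hgf : g ≤ f) : f - g ∈ eigenCone b c l :=
  ⟨fun x => sub_nonneg.2 (hgf x), by rw [hb.schrodinger_sub, hf.2, hg.2, smul_sub]⟩

theorem shift_mem_eigenCone (hb : IsLocallyFiniteGraph b) (hH : HInvOn b c (Set.univ : Set G))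
    {f : X → ℝ} (hf : f ∈ eigenCone b c l) (g : G) : shift g f ∈ eigenCone b c l :=
  ⟨fun x => hf.1 (g⁻¹ • x), by rw [(hH g trivial f (hb.inDom f)).2, hf.2]; rfl⟩

theorem weight_mul_le_of_mem_eigenCone (hb : IsLocallyFiniteGraph b) {f : X → ℝ}
    (hf : f ∈ eigenCone b c l) {x y : X} (hxy : 0 < b x y) :
    b x y * f y ≤ (deg b c x - l) * f x := by
  have heig := congrFun hf.2 x
  have hle : b x y * f y ≤ ∑ z ∈ hb.nbrs x, b x z * f z :=
    Finset.single_le_sum (f := fun z => b x z * f z)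
      (fun z _ => mul_nonneg (hb.nonneg x z) (hf.1 z)) (hb.mem_nbrs.2 hxy)
  rw [hb.schrodinger_apply, Pi.smul_apply, smul_eq_mul] at heig
  linarith

def HarnackBound (b : X → X → ℝ) (c : X → ℝ) (l : ℝ) (x y : X) (K : ℝ) : Prop :=
  ∀ f ∈ eigenCone b c l, f y ≤ K * f x

theorem HarnackBound.trans {x y z : X} {K₁ K₂ : ℝ} (h₁ : HarnackBound b c l x y K₁)
    (h₂ : HarnackBound b c l y z K₂) (hK₂ : 0 ≤ K₂) : HarnackBound b c l x z (K₂ * K₁) :=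
  fun f hf => (h₂ f hf).trans <| by
    rw [mul_assoc]
    exact mul_le_mul_of_nonneg_left (h₁ f hf) hK₂

theorem HarnackBound.mono {x y : X} {K K' : ℝ} (h : HarnackBound b c l x y K) (hKK' : K ≤ K') :
    HarnackBound b c l x y K' :=
  fun f hf => (h f hf).trans (mul_le_mul_of_nonneg_right hKK' (hf.1 x))

theorem harnackBound_of_pos (hb : IsLocallyFiniteGraph b) {x y : X} (hxy : 0 < b x y) :
    HarnackBound b c l x y ((deg b c x - l) / b x y) := fun f hf => by
  rw [div_mul_eq_mul_div, le_div_iff₀ hxy, mul_comm]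
  exact weight_mul_le_of_mem_eigenCone hb hf hxy

theorem exists_harnackBound (hb : IsLocallyFiniteGraph b) (hconn : Connected b) (x y : X) :
    ∃ K, 0 ≤ K ∧ HarnackBound b c l x y K := by
  induction hconn x y with
  | refl => exact ⟨1, zero_le_one, fun f _ => (one_mul _).ge⟩
  | tail _ hyz ih =>
    obtain ⟨K, hK, h⟩ := ih
    exact ⟨_, mul_nonneg (le_max_right _ 0) hK,
      h.trans ((harnackBound_of_pos hb hyz).mono (le_max_left _ 0)) (le_max_right _ 0)⟩

theorem HarnackBound.smul (hb : IsLocallyFiniteGraph b) (hH : HInvOn b c (Set.univ : Set G))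
    {x y : X} {K : ℝ} (h : HarnackBound b c l x y K) (g : G) :
    HarnackBound b c l (g • x) (g • y) K := fun f hf => by
  simpa [shift] using h _ (shift_mem_eigenCone hb hH hf g⁻¹)

theorem HarnackBound.mul (hb : IsLocallyFiniteGraph b) (hH : HInvOn b c (Set.univ : Set G))
    {x₀ : X} {u v : G} {K K' : ℝ} (hu : HarnackBound b c l x₀ (u • x₀) K)
    (hv : HarnackBound b c l x₀ (v • x₀) K') (hK' : 0 ≤ K') :
    HarnackBound b c l x₀ ((u * v) • x₀) (K' * K) := by
  have := hv.smul hb hH u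
  rw [← mul_smul] at this
  exact hu.trans this hK'

theorem HarnackBound.pow (hb : IsLocallyFiniteGraph b) (hH : HInvOn b c (Set.univ : Set G))
    {x₀ : X} {u : G} {K : ℝ} (hu : HarnackBound b c l x₀ (u • x₀) K) (hK : 0 ≤ K) (n : ℕ) :
    HarnackBound b c l x₀ ((u ^ n) • x₀) (K ^ n) := by
  induction n with
  | zero => intro f _; simp
  | succ n ih =>
    rw [pow_succ, pow_succ']
    exact ih.mul hb hH hu hK

theorem pos_of_mem_eigenCone (hb : IsLocallyFiniteGraph b) (hconn : Connected b) {f : X → ℝ}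
    (hf : f ∈ eigenCone b c l) (hf0 : f ≠ 0) (x : X) : 0 < f x := by
  refine (hf.1 x).lt_of_ne' fun hx => hf0 (funext fun y => ?_)
  obtain ⟨K, -, hK⟩ := exists_harnackBound (c := c) (l := l) hb hconn x y
  exact le_antisymm (by simpa [hx] using hK f hf) (hf.1 y)

end EigenCone

section Extreme

variable {b : X → X → ℝ} {c : X → ℝ} {l : ℝ} {x₀ : X}

theorem convex_eigenBase (hb : IsLocallyFiniteGraph b) :
    Convex ℝ (eigenBase b c l x₀) := fun f hf g hg a a' ha ha' haa =>
  ⟨add_mem_eigenCone hb (smul_mem_eigenCone hb ha hf.1) (smul_mem_eigenCone hb ha' hg.1), by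
    simp [hf.2, hg.2, haa]⟩

theorem isCompact_eigenBase (hb : IsLocallyFiniteGraph b) (hconn : Connected b) :
    IsCompact (eigenBase b c l x₀) := by
  choose K _ hK using exists_harnackBound (c := c) (l := l) hb hconn x₀
  have hclosed : IsClosed (eigenBase b c l x₀) :=
    ((isClosed_le continuous_const continuous_id).inter
      (isClosed_eq (hb.continuous_schrodinger c) (continuous_const_smul l))).inter
      (isClosed_eq (continuous_apply x₀) continuous_const)
  refine (isCompact_univ_pi fun x => isCompact_Icc (a := 0) (b := K x)).of_isClosed_subset hclosed
    fun f hf x _ => ⟨hf.1.1 x, ?_⟩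
  simpa [hf.2] using hK x f hf.1

theorem eq_smul_of_le_smul_extremePoint_of_lt (hb : IsLocallyFiniteGraph b) {e h : X → ℝ}
    (he : e ∈ (eigenBase b c l x₀).extremePoints ℝ) (hh : h ∈ eigenCone b c l) {M : ℝ}
    (hM : h ≤ M • e) (hpos : 0 < h x₀) (hlt : h x₀ < M) : h = h x₀ • e := by
  obtain ⟨⟨he_mem, he₀⟩, he_ext⟩ := he
  have hM0 : 0 < M := hpos.trans hlt
  have hMs : 0 < M - h x₀ := sub_pos.2 hlt
  have hu : (h x₀)⁻¹ • h ∈ eigenBase b c l x₀ :=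
    ⟨smul_mem_eigenCone hb (inv_nonneg.2 hpos.le) hh, by simp [hpos.ne']⟩
  have hw : (M - h x₀)⁻¹ • (M • e - h) ∈ eigenBase b c l x₀ :=
    ⟨smul_mem_eigenCone hb (inv_nonneg.2 hMs.le)
      (sub_mem_eigenCone hb (smul_mem_eigenCone hb hM0.le he_mem) hh hM), by
      simp [he₀, hMs.ne']⟩
  have hseg : e ∈ openSegment ℝ ((h x₀)⁻¹ • h) ((M - h x₀)⁻¹ • (M • e - h)) := by
    refine ⟨h x₀ / M, (M - h x₀) / M, by positivity, by positivity, by field_simp; ring, ?_⟩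
    funext x
    simp only [Pi.add_apply, Pi.sub_apply, Pi.smul_apply, smul_eq_mul]
    field_simp
    ring
  rw [← he_ext hu hw hseg, smul_smul, mul_inv_cancel₀ hpos.ne', one_smul]

theorem eq_smul_of_le_smul_extremePoint (hb : IsLocallyFiniteGraph b) {e h : X → ℝ}
    (he : e ∈ (eigenBase b c l x₀).extremePoints ℝ) (hh : h ∈ eigenCone b c l) {M : ℝ}
    (hM : h ≤ M • e) : h = h x₀ • e := by
  have he_mem := he.1
  -- `h + e ≤ (M + 2) • e` satisfies the strict bounds of the previous lemma.
  have key := eq_smul_of_le_smul_extremePoint_of_lt hb he (add_mem_eigenCone hb hh he_mem.1)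
    (M := M + 2) (fun x => by
      have := hM x
      simp only [Pi.add_apply, Pi.smul_apply, smul_eq_mul] at this ⊢
      nlinarith [he_mem.1.1 x])
    (by simp [he_mem.2]; linarith [hh.1 x₀])
    (by simp [he_mem.2]; linarith [hM x₀, show (M • e) x₀ = M by simp [he_mem.2]])
  rw [Pi.add_apply, he_mem.2, add_smul, one_smul] at key
  exact add_right_cancel key

theorem subset_of_extremePoints_subset {E : Type*} [AddCommGroup E] [Module ℝ E]
    [TopologicalSpace E] [T2Space E] [IsTopologicalAddGroup E] [ContinuousSMul ℝ E]
    [LocallyConvexSpace ℝ E] {s t : Set E} (hs : IsCompact s) (hsc : Convex ℝ s)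
    (ht : IsClosed t) (htc : Convex ℝ t) (h : s.extremePoints ℝ ⊆ t) : s ⊆ t :=
  closure_convexHull_extremePoints hs hsc ▸ closure_minimal (convexHull_min h htc) ht

end Extreme

section GroupTheory

theorem mem_Qsub_iff {N : Subgroup G} [N.Normal] {g : G} : g ∈ Qsub N ↔ ∀ h, ⁅g, h⁆ ∈ N := by
  rw [Qsub, Subgroup.mem_comap, Subgroup.mem_center_iff, (QuotientGroup.mk'_surjective N).forall]
  refine forall_congr' fun h => ?_
  rw [← QuotientGroup.eq_one_iff, ← QuotientGroup.mk'_apply, map_commutatorElement,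
    commutatorElement_eq_one_iff_mul_comm, eq_comm]

theorem commutatorElement_pow_right_of_mem_center {H : Type*} [Group H] {a w : H}
    (h : ⁅a, w⁆ ∈ Subgroup.center H) (n : ℕ) : ⁅a, w ^ n⁆ = ⁅a, w⁆ ^ n := by
  have hconj : a * w * a⁻¹ = ⁅a, w⁆ * w := by rw [commutatorElement_def]; group
  have hcomm : Commute ⁅a, w⁆ w := (Subgroup.mem_center_iff.1 h w).symm
  rw [commutatorElement_def, ← conj_pow, hconj, hcomm.mul_pow, mul_inv_cancel_right]

theorem commutatorElement_pow_pow_of_mem_center {H : Type*} [Group H] {a w : H}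
    (h : ⁅a, w⁆ ∈ Subgroup.center H) (n : ℕ) : ⁅a ^ n, w ^ n⁆ = ⁅a, w⁆ ^ (n * n) := by
  have h' : ⁅w ^ n, a⁆ ∈ Subgroup.center H := by
    rw [← commutatorElement_inv, commutatorElement_pow_right_of_mem_center h]
    exact Subgroup.inv_mem _ (Subgroup.pow_mem _ h n)
  rw [← commutatorElement_inv, commutatorElement_pow_right_of_mem_center h',
    ← commutatorElement_inv, commutatorElement_pow_right_of_mem_center h, inv_pow, inv_inv,
    ← pow_mul]

theorem mem_Qsub_commutator (g : G) : g ∈ Qsub (commutator G) :=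
  mem_Qsub_iff.2 fun h =>
    Subgroup.commutator_mem_commutator (Subgroup.mem_top g) (Subgroup.mem_top h)

theorem commutator_le_of_isNilpotent [Group.IsNilpotent G] (S : Subgroup G)
    (hS : ∀ (N : Subgroup G) [N.Normal], N ≤ S → ∀ a w : G, ⁅a, w⁆ ∈ Qsub N → ⁅a, w⁆ ∈ S) :
    commutator G ≤ S := by
  have hdesc := Subgroup.lowerCentralSeries_isDescendingCentralSeries (G := G)
  have step : ∀ k, (⊤ : Subgroup G).lowerCentralSeries (k + 2) ≤ S →
      (⊤ : Subgroup G).lowerCentralSeries (k + 1) ≤ S := fun k hk =>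
    Subgroup.commutator_le.2 fun u hu g _ =>
      hS _ hk u g (mem_Qsub_iff.2 fun h => hdesc.2 _ _ (hdesc.2 u k hu g) h)
  have key : ∀ m k, Group.nilpotencyClass G ≤ k + 1 + m →
      (⊤ : Subgroup G).lowerCentralSeries (k + 1) ≤ S := by
    intro m
    induction m with
    | zero =>
      intro k hk
      rw [Subgroup.lowerCentralSeries_eq_bot_iff_nilpotencyClass_le.2 hk]
      exact bot_le
    | succ m ih => exact fun k hk => step k (ih (k + 1) (by omega))
  exact key (Group.nilpotencyClass G) 0 (by omega)

end GroupTheory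

theorem le_one_of_forall_pow_le {γ B : ℝ} (h : ∀ n : ℕ, γ ^ n ≤ B) : γ ≤ 1 :=
  not_lt.1 fun hγ => (pow_unbounded_of_one_lt B hγ).elim fun n hn => (h n).not_gt hn

theorem le_one_of_forall_pow_mul_self_le {γ K : ℝ} (hγ : 0 ≤ γ) (hK : 0 ≤ K)
    (h : ∀ n : ℕ, γ ^ (n * n) ≤ K ^ n) : γ ≤ 1 :=
  le_one_of_forall_pow_le (B := max K 1) fun n => by
    rcases Nat.eq_zero_or_pos n with rfl | hn
    · simp
    · refine le_max_of_le_left ((pow_le_pow_iff_left₀ (pow_nonneg hγ n) hK hn.ne').1 ?_)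
      rw [← pow_mul]
      exact h n

section Multiplier

variable {b : X → X → ℝ} {c : X → ℝ} {l : ℝ} {x₀ : X}

theorem apply_smul_eq_of_forall_shift_eq {N : Subgroup G} {e : X → ℝ}
    (hN : ∀ n ∈ N, shift n e = e) {m : G} (hm : m ∈ N) (y : X) : e (m • y) = e y := by
  simpa [shift] using congrFun (hN _ (N.inv_mem hm)) y

/-- By cocompactness `shift g e ≤ M • e`, and `e` spans an extreme ray. -/
theorem shift_extremePoint_eq_smul (hb : IsLocallyFiniteGraph b)
    (hH : HInvOn b c (Set.univ : Set G)) (hconn : Connected b) (hcocpt : CocompactAction G X)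
    {e : X → ℝ} (he : e ∈ (eigenBase b c l x₀).extremePoints ℝ) {N : Subgroup G}
    [N.Normal] (hN : ∀ n ∈ N, shift n e = e) {g : G} (hg : g ∈ Qsub N) :
    shift g e = e (g⁻¹ • x₀) • e := by
  obtain ⟨V, hV⟩ := hcocpt
  choose K hK0 hK using fun v => exists_harnackBound (c := c) (l := l) hb hconn v (g⁻¹ • v)
  have hle : shift g e ≤ (∑ v ∈ V, K v) • e := fun x => by
    obtain ⟨h, v, hv, rfl⟩ := hV x
    have hcomm : g⁻¹ • h • v = ⁅g⁻¹, h⁆ • h • g⁻¹ • v := by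
      simp only [smul_smul, commutatorElement_def]
      group
    calc shift g e (h • v) = e (h • g⁻¹ • v) := by
          rw [shift, hcomm, apply_smul_eq_of_forall_shift_eq hN (mem_Qsub_iff.1 (inv_mem hg) h)]
      _ ≤ K v * e (h • v) := (hK v).smul hb hH h e he.1.1
      _ ≤ (∑ v ∈ V, K v) * e (h • v) :=
          mul_le_mul_of_nonneg_right (Finset.single_le_sum (fun v _ => hK0 v) hv) (he.1.1.1 _)
  exact eq_smul_of_le_smul_extremePoint hb he (shift_mem_eigenCone hb hH he.1.1 g) hle

theorem shift_eq_self_of_le_one {e : X → ℝ} (he : e ∈ eigenBase b c l x₀) {g : G}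
    (hmul : shift g e = e (g⁻¹ • x₀) • e) (h₁ : e (g⁻¹ • x₀) ≤ 1) (h₂ : e (g • x₀) ≤ 1) :
    shift g e = e := by
  have hprod : e (g⁻¹ • x₀) * e (g • x₀) = 1 := by
    simpa [shift, he.2] using (congrFun hmul (g • x₀)).symm
  have : e (g⁻¹ • x₀) = 1 := by nlinarith [he.1.1 (g⁻¹ • x₀), he.1.1 (g • x₀)]
  rw [hmul, this, one_smul]

theorem apply_inv_smul_le_one_of_mem_stabilizer (hb : IsLocallyFiniteGraph b)
    (hH : HInvOn b c (Set.univ : Set G)) (hconn : Connected b) {e : X → ℝ}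
    (he : e ∈ eigenBase b c l x₀) {t : G} (hmul : shift t e = e (t⁻¹ • x₀) • e) {x : X}
    (ht : t ∈ MulAction.stabilizer G x) : e (t⁻¹ • x₀) ≤ 1 := by
  obtain ⟨K, -, hK⟩ := exists_harnackBound (c := c) (l := l) hb hconn x x₀
  refine le_one_of_forall_pow_le (B := K * e x) fun n => ?_
  have hpow : e ((t ^ n)⁻¹ • x₀) = e (t⁻¹ • x₀) ^ n := by
    simpa [shift, he.2] using congrFun (shift_pow_of_shift_eq_smul hmul n) x₀
  have hfix : (t ^ n)⁻¹ • x = x := (MulAction.stabilizer G x).inv_mem (pow_mem ht n)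
  simpa [hpow, hfix] using (hK.smul hb hH (t ^ n)⁻¹) e he.1

theorem exists_harnackBound_commutatorElement_pow (hb : IsLocallyFiniteGraph b)
    (hH : HInvOn b c (Set.univ : Set G)) (hconn : Connected b) (x₀ : X) (a w : G) :
    ∃ κ, 0 ≤ κ ∧ ∀ n : ℕ, HarnackBound b c l x₀ (⁅w ^ n, a ^ n⁆ • x₀) (κ ^ n) := by
  choose K hK0 hK using fun u : G => exists_harnackBound (c := c) (l := l) hb hconn x₀ (u • x₀)
  refine ⟨K a⁻¹ * (K w⁻¹ * (K a * K w)),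
    mul_nonneg (hK0 _) (mul_nonneg (hK0 _) (mul_nonneg (hK0 _) (hK0 _))), fun n => ?_⟩
  have := ((((hK w).pow hb hH (hK0 w) n).mul hb hH ((hK a).pow hb hH (hK0 a) n)
    (pow_nonneg (hK0 a) n)).mul hb hH ((hK w⁻¹).pow hb hH (hK0 _) n)
    (pow_nonneg (hK0 _) n)).mul hb hH ((hK a⁻¹).pow hb hH (hK0 _) n)
    (pow_nonneg (hK0 _) n)
  rwa [inv_pow, inv_pow, ← commutatorElement_def, ← mul_pow, ← mul_pow, ← mul_pow] at this

/-- Modulo `N`, `⁅a, w⁆ ^ (n * n)` is the word `⁅w ^ n, a ^ n⁆` of length `4 n`, so the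
multiplier `γ` satisfies `γ ^ (n * n) ≤ κ ^ n`. -/
theorem apply_inv_smul_le_one_of_commutator (hb : IsLocallyFiniteGraph b)
    (hH : HInvOn b c (Set.univ : Set G)) (hconn : Connected b) {e : X → ℝ}
    (he : e ∈ eigenBase b c l x₀) {N : Subgroup G} [N.Normal]
    (hN : ∀ n ∈ N, shift n e = e) {a w : G} (haw : ⁅a, w⁆ ∈ Qsub N)
    (hmul : shift ⁅a, w⁆ e = e (⁅a, w⁆⁻¹ • x₀) • e) : e (⁅a, w⁆⁻¹ • x₀) ≤ 1 := by
  obtain ⟨κ, hκ, hword⟩ := exists_harnackBound_commutatorElement_pow (l := l) hb hH hconn x₀ a w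
  refine le_one_of_forall_pow_mul_self_le (he.1.1 _) hκ fun n => ?_
  have hpow : e ((⁅a, w⁆ ^ (n * n))⁻¹ • x₀) = e (⁅a, w⁆⁻¹ • x₀) ^ (n * n) := by
    simpa [shift, he.2] using congrFun (shift_pow_of_shift_eq_smul hmul (n * n)) x₀
  have hmod : ⁅w ^ n, a ^ n⁆ * ⁅a, w⁆ ^ (n * n) ∈ N := by
    rw [← QuotientGroup.eq_one_iff, QuotientGroup.mk_mul, QuotientGroup.mk_pow,
      ← commutatorElement_inv, QuotientGroup.mk_inv, ← QuotientGroup.mk'_apply,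
      map_commutatorElement, map_pow, map_pow, commutatorElement_pow_pow_of_mem_center haw,
      ← map_commutatorElement, QuotientGroup.mk'_apply, inv_mul_cancel]
  calc e (⁅a, w⁆⁻¹ • x₀) ^ (n * n) = e (⁅w ^ n, a ^ n⁆ • x₀) := by
        rw [← hpow, ← apply_smul_eq_of_forall_shift_eq hN hmod, mul_smul, smul_inv_smul]
    _ ≤ κ ^ n := by simpa [he.2] using hword n e he.1

end Multiplier

section FixingSubgroup

variable {b : X → X → ℝ} {c : X → ℝ}

variable (G) in
def eigenFixingSubgroup (b : X → X → ℝ) (c : X → ℝ) : Subgroup G where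
  carrier := {g | ∀ l, ∀ f ∈ eigenCone b c l, shift g f = f}
  mul_mem' {g h} hg hh l f hf := by rw [shift_mul, hh l f hf, hg l f hf]
  one_mem' _ f _ := shift_one f
  inv_mem' {g} hg l f hf := by
    conv_lhs => rw [← hg l f hf, ← shift_mul, inv_mul_cancel, shift_one]

theorem mem_eigenFixingSubgroup_of_extremePoints (hb : IsLocallyFiniteGraph b)
    (hconn : Connected b) (x₀ : X) {g : G}
    (h : ∀ l, ∀ e ∈ (eigenBase b c l x₀).extremePoints ℝ, shift g e = e) :
    g ∈ eigenFixingSubgroup G b c := by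
  intro l f hf
  have hP : eigenBase b c l x₀ ⊆ {f | ∀ x, f (g⁻¹ • x) = f x} := by
    refine subset_of_extremePoints_subset (isCompact_eigenBase hb hconn)
      (convex_eigenBase hb) ?_ ?_ fun e he x => congrFun (h l e he) x
    · simp only [Set.ofPred_forall]
      exact isClosed_iInter fun x => isClosed_eq (continuous_apply _) (continuous_apply _)
    · intro f₁ hf₁ f₂ hf₂ a₁ a₂ _ _ _ x
      simp [hf₁ x, hf₂ x]
  rcases eq_or_ne f 0 with rfl | hf0
  · rfl
  have hpos := pos_of_mem_eigenCone hb hconn hf hf0 x₀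
  have hnorm : (f x₀)⁻¹ • f ∈ eigenBase b c l x₀ :=
    ⟨smul_mem_eigenCone hb (inv_nonneg.2 hpos.le) hf, by simp [hpos.ne']⟩
  funext x
  simpa [shift, hpos.ne'] using hP hnorm x

theorem commutator_le_eigenFixingSubgroup [Group.IsNilpotent G] [Nonempty X]
    (hb : IsLocallyFiniteGraph b) (hH : HInvOn b c (Set.univ : Set G)) (hconn : Connected b)
    (hcocpt : CocompactAction G X) : commutator G ≤ eigenFixingSubgroup G b c := by
  obtain ⟨x₀⟩ := ‹Nonempty X›
  refine commutator_le_of_isNilpotent _ fun N _ hN a w haw =>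
    mem_eigenFixingSubgroup_of_extremePoints hb hconn x₀ fun l e he => ?_
  have hNe : ∀ n ∈ N, shift n e = e := fun n hn => hN hn l e he.1.1
  have hwa : ⁅w, a⁆ ∈ Qsub N := by rw [← commutatorElement_inv]; exact inv_mem haw
  have hmul := shift_extremePoint_eq_smul hb hH hconn hcocpt he hNe haw
  refine shift_eq_self_of_le_one he.1 hmul
    (apply_inv_smul_le_one_of_commutator hb hH hconn he.1 hNe haw hmul) ?_
  have h := apply_inv_smul_le_one_of_commutator hb hH hconn he.1 hNe hwa
    (shift_extremePoint_eq_smul hb hH hconn hcocpt he hNe hwa)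
  rwa [← commutatorElement_inv, inv_inv] at h

theorem stabilizer_le_eigenFixingSubgroup [Group.IsNilpotent G] (hb : IsLocallyFiniteGraph b)
    (hH : HInvOn b c (Set.univ : Set G)) (hconn : Connected b) (hcocpt : CocompactAction G X)
    (x : X) : MulAction.stabilizer G x ≤ eigenFixingSubgroup G b c := by
  have : Nonempty X := ⟨x⟩
  have hcomm := commutator_le_eigenFixingSubgroup hb hH hconn hcocpt (c := c)
  intro t ht
  refine mem_eigenFixingSubgroup_of_extremePoints hb hconn x fun l e he => ?_
  have hNe : ∀ n ∈ commutator G, shift n e = e := fun n hn => hcomm hn l e he.1.1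
  have hmul := shift_extremePoint_eq_smul hb hH hconn hcocpt he hNe (mem_Qsub_commutator t)
  refine shift_eq_self_of_le_one he.1 hmul
    (apply_inv_smul_le_one_of_mem_stabilizer hb hH hconn he.1 hmul ht) ?_
  have h := apply_inv_smul_le_one_of_mem_stabilizer hb hH hconn he.1
    (shift_extremePoint_eq_smul hb hH hconn hcocpt he hNe (mem_Qsub_commutator t⁻¹)) (inv_mem ht)
  rwa [inv_inv] at h

theorem mem_eigenFixingSubgroup_of_pow_mem [Group.IsNilpotent G] [Nonempty X]
    (hb : IsLocallyFiniteGraph b) (hH : HInvOn b c (Set.univ : Set G)) (hconn : Connected b)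
    (hcocpt : CocompactAction G X) {g : G} {n : ℕ} (hn : n ≠ 0)
    (hgn : g ^ n ∈ eigenFixingSubgroup G b c) : g ∈ eigenFixingSubgroup G b c := by
  obtain ⟨x₀⟩ := ‹Nonempty X›
  have hcomm := commutator_le_eigenFixingSubgroup hb hH hconn hcocpt (c := c)
  refine mem_eigenFixingSubgroup_of_extremePoints hb hconn x₀ fun l e he => ?_
  have hmul := shift_extremePoint_eq_smul hb hH hconn hcocpt he
    (fun m hm => hcomm hm l e he.1.1) (mem_Qsub_commutator g)
  have hγ : e (g⁻¹ • x₀) ^ n = 1 := by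
    have := congrFun (shift_pow_of_shift_eq_smul hmul n) x₀
    rw [hgn l e he.1.1] at this
    simpa [he.1.2] using this.symm
  rw [hmul, (pow_eq_one_iff_of_nonneg (he.1.1.1 _) hn).1 hγ, one_smul]

end FixingSubgroup

section FiniteGeneration

variable {b : X → X → ℝ}

theorem closure_translates_eq_top (hbinv : ∀ (g : G) (x y : X), b (g • x) (g • y) = b x y)
    (hconn : Connected b) {V : Finset X} (hV : ∀ x, ∃ g : G, ∃ v ∈ V, x = g • v) {v₀ : X}
    (hv₀ : v₀ ∈ V) :
    Subgroup.closure {k : G | ∃ v ∈ V, ∃ w ∈ V, k • w = v ∨ 0 < b v (k • w)} = ⊤ := by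
  set A := {k : G | ∃ v ∈ V, ∃ w ∈ V, k • w = v ∨ 0 < b v (k • w)}
  have reach : ∀ x, ∃ h ∈ Subgroup.closure A, ∃ v ∈ V, x = h • v := fun x => by
    induction hconn v₀ x with
    | refl => exact ⟨1, one_mem _, v₀, hv₀, (one_smul G v₀).symm⟩
    | @tail y z _ hyz ih =>
      obtain ⟨h, hh, v, hv, rfl⟩ := ih
      obtain ⟨k, w, hw, hk⟩ := hV (h⁻¹ • z)
      refine ⟨h * k, mul_mem hh (Subgroup.subset_closure ⟨v, hv, w, hw, Or.inr ?_⟩), w, hw, ?_⟩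
      · rwa [← hk, ← hbinv h, smul_inv_smul]
      · rw [mul_smul, ← hk, smul_inv_smul]
  refine eq_top_iff.2 fun g _ => ?_
  obtain ⟨h, hh, v, hv, hgv⟩ := reach (g • v₀)
  have hA : h⁻¹ * g ∈ A := ⟨v, hv, v₀, hv₀, Or.inl (by rw [mul_smul, hgv, inv_smul_smul])⟩
  simpa using mul_mem hh (Subgroup.subset_closure hA)

theorem finite_image_mk_of_stabilizer_le (R : Subgroup G)
    (hstab : ∀ x : X, MulAction.stabilizer G x ≤ R) {W Y : Set X} (hW : W.Finite) (hY : Y.Finite) :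
    ((QuotientGroup.mk : G → G ⧸ R) '' {k | ∃ w ∈ W, k • w ∈ Y}).Finite := by
  refine ((hW.prod hY).biUnion fun p _ =>
    Set.Subsingleton.finite (s := QuotientGroup.mk '' {k : G | k • p.1 = p.2}) ?_).subset ?_
  · rintro _ ⟨k₁, hk₁, rfl⟩ _ ⟨k₂, hk₂, rfl⟩
    refine QuotientGroup.eq.2 (hstab p.1 ?_)
    rw [MulAction.mem_stabilizer_iff, mul_smul, hk₂, inv_smul_eq_iff, hk₁]
  · rintro _ ⟨k, ⟨w, hw, hkw⟩, rfl⟩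
    exact Set.mem_biUnion (x := (w, k • w)) ⟨hw, hkw⟩ ⟨k, rfl, rfl⟩

theorem fg_quotient_of_stabilizer_le [Nonempty X] (hb : IsLocallyFiniteGraph b)
    (hbinv : ∀ (g : G) (x y : X), b (g • x) (g • y) = b x y) (hconn : Connected b)
    (hcocpt : CocompactAction G X) (R : Subgroup G) [R.Normal]
    (hstab : ∀ x : X, MulAction.stabilizer G x ≤ R) : Group.FG (G ⧸ R) := by
  obtain ⟨V, hV⟩ := hcocpt
  obtain ⟨-, v₀, hv₀, -⟩ := hV (Classical.arbitrary X)
  set A := {k : G | ∃ v ∈ V, ∃ w ∈ V, k • w = v ∨ 0 < b v (k • w)}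
  have hA : A ⊆ {k | ∃ w ∈ (V : Set X), k • w ∈ (V : Set X) ∪ ⋃ v ∈ V, {y | 0 < b v y}} := by
    rintro k ⟨v, hv, w, hw, hkw | hkw⟩
    · exact ⟨w, hw, Or.inl (hkw ▸ hv)⟩
    · exact ⟨w, hw, Or.inr (Set.mem_biUnion hv hkw)⟩
  refine Group.fg_iff.2 ⟨QuotientGroup.mk '' A, ?_, ((finite_image_mk_of_stabilizer_le R hstab
    V.finite_toSet (V.finite_toSet.union (V.finite_toSet.biUnion fun v _ =>
      hb.finite_nbrs v))).subset (Set.image_mono hA))⟩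
  rw [← QuotientGroup.coe_mk', ← MonoidHom.map_closure,
    closure_translates_eq_top hbinv hconn hV hv₀, ← MonoidHom.range_eq_map,
    QuotientGroup.range_mk']

end FiniteGeneration

theorem exists_mulEquiv_of_fg_of_isMulTorsionFree (H : Type*) [CommGroup H] [Group.FG H]
    [IsMulTorsionFree H] : ∃ d : ℕ, Nonempty (H ≃* Multiplicative (Fin d → ℤ)) := by
  have : Module.Finite ℤ (Additive H) := Module.Finite.iff_addGroup_fg.2 inferInstance
  obtain ⟨d, B⟩ := Module.basisOfFiniteTypeTorsionFree' (R := ℤ) (M := Additive H)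
  exact ⟨d, ⟨AddEquiv.toMultiplicative B.equivFun.toAddEquiv⟩⟩

open scoped IsMulCommutative in
theorem exists_surjective_ker_eq_of_fg (R : Subgroup G) [R.Normal] (hcomm : commutator G ≤ R)
    (hfg : Group.FG (G ⧸ R)) (htf : ∀ (g : G) (n : ℕ), n ≠ 0 → g ^ n ∈ R → g ∈ R) :
    ∃ (d : ℕ) (φ : G →* Multiplicative (Fin d → ℤ)), Function.Surjective φ ∧ φ.ker = R := by
  have := Subgroup.Normal.quotient_commutative_iff_commutator_le.2 hcomm
  have : IsMulTorsionFree (G ⧸ R) := isMulTorsionFree_iff_not_isOfFinOrder.2 fun q hq hfin => by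
    obtain ⟨g, rfl⟩ := QuotientGroup.mk_surjective q
    obtain ⟨n, hn, hgn⟩ := isOfFinOrder_iff_pow_eq_one.1 hfin
    rw [← QuotientGroup.mk_pow, QuotientGroup.eq_one_iff] at hgn
    exact hq ((QuotientGroup.eq_one_iff g).2 (htf g n hn.ne' hgn))
  obtain ⟨d, ⟨e⟩⟩ := exists_mulEquiv_of_fg_of_isMulTorsionFree (G ⧸ R)
  refine ⟨d, e.toMonoidHom.comp (QuotientGroup.mk' R),
    e.surjective.comp (QuotientGroup.mk'_surjective R), ?_⟩
  ext g
  simp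

theorem exists_normal_subgroup_Zd_quotient_general {X : Type*} {G : Type*}
    [Group G] [MulAction G X] [Group.IsNilpotent G]
    (b : X → X → ℝ) (c : X → ℝ)
    (hb0 : ∀ x y, 0 ≤ b x y) (hbd : ∀ x, b x x = 0)
    (hlf : ∀ x : X, {y | 0 < b x y}.Finite) (hconn : Connected b)
    (hcocpt : CocompactAction G X)
    (hH : HInvOn b c (Set.univ : Set G)) :
    ∃ R : Subgroup G, R.Normal ∧
      (∀ (l : ℝ) (f : X → ℝ), InDom b f → (schrodinger b c f = fun x => l * f x) →
        (∀ x, 0 ≤ f x) → f ≠ 0 → ∀ g ∈ R, shift g f = f) ∧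
      (∀ x : X, MulAction.stabilizer G x ≤ R) ∧
      (∃ (d : ℕ) (φ : G →* Multiplicative (Fin d → ℤ)),
        Function.Surjective φ ∧ φ.ker = R) := by
  rcases isEmpty_or_nonempty X with hX | hX
  · exact ⟨⊤, inferInstance, fun _ f _ _ _ hf => absurd (Subsingleton.elim f 0) hf,
      fun _ => le_top, 0, 1, fun _ => ⟨1, Subsingleton.elim _ _⟩, MonoidHom.ker_one⟩
  have hb : IsLocallyFiniteGraph b := ⟨hb0, hlf⟩
  set R := eigenFixingSubgroup G b c
  have hcomm : commutator G ≤ R := commutator_le_eigenFixingSubgroup hb hH hconn hcocpt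
  have : R.Normal := .of_commutator_le (G := G) hcomm
  have hstab (x : X) : MulAction.stabilizer G x ≤ R :=
    stabilizer_le_eigenFixingSubgroup hb hH hconn hcocpt x
  have hfg : Group.FG (G ⧸ R) :=
    fg_quotient_of_stabilizer_le hb (hH.weight_smul hb hbd) hconn hcocpt R hstab
  refine ⟨R, this, fun l f _ hf hf0 _ g hg => hg l f ⟨hf0, hf⟩, hstab,
    exists_surjective_ker_eq_of_fg R hcomm hfg fun g n hn =>
      mem_eigenFixingSubgroup_of_pow_mem hb hH hconn hcocpt hn⟩

/-- There is a normal subgroup `R` containing all stabilisers, under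
which all positive generalised eigenfunctions are invariant, with `G/R ≅ ℤ^d`. -/
theorem exists_normal_subgroup_Zd_quotient {X : Type*} [Countable X] {G : Type*}
    [Group G] [MulAction G X] [Group.IsNilpotent G]
    (b : X → X → ℝ) (c : X → ℝ)
    (hb0 : ∀ x y, 0 ≤ b x y) (hbd : ∀ x, b x x = 0) (hbs : ∀ x, Summable (b x))
    (hlf : ∀ x : X, {y | 0 < b x y}.Finite) (hconn : Connected b)
    (hcocpt : CocompactAction G X)
    (hH : HInvOn b c (Set.univ : Set G)) :
    ∃ R : Subgroup G, R.Normal ∧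
      (∀ (l : ℝ) (f : X → ℝ), InDom b f → (schrodinger b c f = fun x => l * f x) →
        (∀ x, 0 ≤ f x) → f ≠ 0 → ∀ g ∈ R, shift g f = f) ∧
      (∀ x : X, MulAction.stabilizer G x ≤ R) ∧
      (∃ (d : ℕ) (φ : G →* Multiplicative (Fin d → ℤ)),
        Function.Surjective φ ∧ φ.ker = R) :=
  exists_normal_subgroup_Zd_quotient_general b c hb0 hbd hlf hconn hcocpt hH

end GraphPaper
end
end

section
/- Let (b,c) be a locally finite connected graph over X with a free and cocompact action of ℤ^d on X such that b and c are ℤ^d-invariant, and fix x₀ ∈ X. Let α₁ ≠ α₂ ∈ ℝ^d and t ∈ (0,1), and suppose that for i = 1, 2 there is a strictly positive λᵢ-harmonic function fᵢ in the domain of H_{b,c} with fᵢ(x₀) = 1 and fᵢ(z·x) = exp(⟨αᵢ, z⟩) fᵢ(x) for all z ∈ ℤ^d, x ∈ X, and that there is a strictly positive λ-harmonic function f in the domain of H_{b,c} with f(x₀) = 1 and f(z·x) = exp(⟨tα₁ + (1−t)α₂, z⟩) f(x) for all z ∈ ℤ^d, x ∈ X. Then λ > tλ₁ + (1−t)λ₂;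 that is, the map assigning to each character exponent α its generalised eigenvalue is strictly concave. -/
/-!
Put `g = f₁ ^ t * f₂ ^ (1 - t)`. Weighted AM-GM, applied to `f₁ y / f₁ x` and `f₂ y / f₂ x` under
the sum defining `H`, gives `H g ≥ (t λ₁ + (1 - t) λ₂) g`, strictly at `x` unless `f₁ / f₂` takes
the same value at `x` and at all its neighbours. Since the exponent of `f` is `t α₁ + (1 - t) α₂`,
the quotient `g / f` is `ℤ^d`-invariant, so by cocompactness it attains its minimum at some `w`;
there `g` lies above the multiple of `f` touching it, whence `H g (w) ≤ λ g (w)` and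
`t λ₁ + (1 - t) λ₂ ≤ λ`. In case of equality `g` is `λ`-superharmonic, so by the strong minimum
principle on the connected graph `g / f` is constant, `g` is `λ`-harmonic and `f₁ / f₂` is
constant; then `f₁ = f₂`, which forces `α₁ = α₂`.
-/

open MeasureTheory
open scoped BigOperators

noncomputable section

namespace GraphPaper

variable {X : Type*}

variable {G : Type*} [Group G] [MulAction G X]

section Graph

variable {b : X → X → ℝ} {c : X → ℝ}

theorem InDom.summable_mul {f : X → ℝ} (hb0 : ∀ x y, 0 ≤ b x y) (hf : InDom b f) (x : X) :
    Summable fun y => b x y * f y :=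
  Summable.of_norm <| (hf x).congr fun y => by
    rw [Real.norm_eq_abs, abs_mul, abs_of_nonneg (hb0 x y)]

theorem schrodinger_apply_eq_deg_sub {f : X → ℝ} {x : X} (hbs : Summable (b x))
    (hf : Summable fun y => b x y * f y) :
    schrodinger b c f x = deg b c x * f x - ∑' y, b x y * f y := by
  have hsplit : (fun y => b x y * (f x - f y)) = fun y => b x y * f x - b x y * f y :=
    funext fun y => mul_sub _ _ _
  rw [schrodinger, deg, hsplit, (hbs.mul_right (f x)).tsum_sub hf, tsum_mul_right]
  ring

theorem schrodinger_const_mul (a : ℝ) (f : X → ℝ) :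
    schrodinger b c (fun y => a * f y) = fun x => a * schrodinger b c f x := by
  funext x
  simp only [schrodinger, ← mul_sub, mul_left_comm (b x _), tsum_mul_left]
  ring

theorem Connected.forall_of_adj_imp (hconn : Connected b) {p : X → Prop} {w : X} (hw : p w)
    (hstep : ∀ x y, 0 < b x y → p x → p y) (x : X) : p x := by
  induction hconn w x with
  | refl => exact hw
  | tail _ hxy ih => exact hstep _ _ hxy ih

theorem Connected.eq_of_div_eq_div (hconn : Connected b) {f₁ f₂ : X → ℝ} {x₀ : X}
    (h₀ : f₁ x₀ = f₂ x₀) (hedge : ∀ x y, 0 < b x y → f₁ y / f₁ x = f₂ y / f₂ x)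
    (hne : ∀ x, f₁ x ≠ 0) : f₁ = f₂ :=
  funext <| hconn.forall_of_adj_imp h₀ fun x y hxy hx => by
    rw [← div_left_inj' (hne x), hedge x y hxy, hx]

variable {l : ℝ} {f g : X → ℝ}

theorem hasSum_mul_sub_schrodinger (hb0 : ∀ x y, 0 ≤ b x y) (hbs : ∀ x, Summable (b x))
    (hf_pos : ∀ x, 0 < f x) (hf : InDom b f) (hg : InDom b g)
    (hharm : schrodinger b c f = fun x => l * f x) (w : X) :
    HasSum (fun y => b w y * (g y - g w / f w * f y)) (l * g w - schrodinger b c g w) := by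
  have hfg : g w / f w * f w = g w := div_mul_cancel₀ (g w) (hf_pos w).ne'
  have hsg := hg.summable_mul hb0 w
  have hsf := hf.summable_mul hb0 w
  have hHf := congrFun hharm w
  rw [schrodinger_apply_eq_deg_sub (hbs w) hsf] at hHf
  have hsum := hsg.hasSum.sub (hsf.hasSum.mul_left (g w / f w))
  have hterm : (fun y => b w y * (g y - g w / f w * f y)) =
      fun y => b w y * g y - g w / f w * (b w y * f y) := funext fun y => by ring
  have hval : l * g w - (deg b c w * g w - ∑' y, b w y * g y) =
      ∑' y, b w y * g y - g w / f w * ∑' y, b w y * f y := by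
    linear_combination (deg b c w - l) * hfg - g w / f w * hHf
  rwa [hterm, schrodinger_apply_eq_deg_sub (hbs w) hsg, hval]

variable {w : X}

theorem schrodinger_le_mul_of_forall_div_le (hb0 : ∀ x y, 0 ≤ b x y)
    (hbs : ∀ x, Summable (b x)) (hf_pos : ∀ x, 0 < f x) (hf : InDom b f) (hg : InDom b g)
    (hharm : schrodinger b c f = fun x => l * f x) (hw : ∀ y, g w / f w ≤ g y / f y) :
    schrodinger b c g w ≤ l * g w :=
  sub_nonneg.1 <| (hasSum_mul_sub_schrodinger hb0 hbs hf_pos hf hg hharm w).nonneg fun y =>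
    mul_nonneg (hb0 w y) (sub_nonneg.2 ((le_div_iff₀ (hf_pos y)).1 (hw y)))

theorem schrodinger_lt_mul_of_div_lt (hb0 : ∀ x y, 0 ≤ b x y) (hbs : ∀ x, Summable (b x))
    (hf_pos : ∀ x, 0 < f x) (hf : InDom b f) (hg : InDom b g)
    (hharm : schrodinger b c f = fun x => l * f x) (hw : ∀ y, g w / f w ≤ g y / f y) {y : X}
    (hy : 0 < b w y) (hlt : g w / f w < g y / f y) :
    schrodinger b c g w < l * g w := by
  have hs := hasSum_mul_sub_schrodinger hb0 hbs hf_pos hf hg hharm w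
  rw [← sub_pos, ← hs.tsum_eq]
  refine hs.summable.tsum_pos (fun y' => ?_) y ?_
  · exact mul_nonneg (hb0 w y') (sub_nonneg.2 ((le_div_iff₀ (hf_pos y')).1 (hw y')))
  · exact mul_pos hy (sub_pos.2 ((lt_div_iff₀ (hf_pos y)).1 hlt))

/-- The strong minimum principle for `λ`-superharmonic functions relative to a positive
`λ`-harmonic one. -/
theorem Connected.eq_const_mul_of_forall_div_le (hconn : Connected b) (hb0 : ∀ x y, 0 ≤ b x y)
    (hbs : ∀ x, Summable (b x)) (hf_pos : ∀ x, 0 < f x) (hf : InDom b f) (hg : InDom b g)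
    (hharm : schrodinger b c f = fun x => l * f x) (hsuper : ∀ x, l * g x ≤ schrodinger b c g x)
    (hw : ∀ y, g w / f w ≤ g y / f y) (x : X) : g x = g w / f w * f x := by
  have hmin : ∀ x y, g x / f x ≤ g y / f y := hconn.forall_of_adj_imp hw fun x y hxy hx => by
    by_contra hy
    obtain ⟨y', hy'⟩ := not_forall.1 hy
    exact (hsuper x).not_gt <| schrodinger_lt_mul_of_div_lt hb0 hbs hf_pos hf hg hharm hx hxy
      ((hx y').trans_lt (not_le.1 hy'))
  exact (div_eq_iff (hf_pos x).ne').1 ((hmin x w).antisymm (hw x))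

end Graph

theorem rpow_mul_rpow_eq_mul_div_rpow {t s p₁ p₂ q₁ q₂ : ℝ} (hp₁ : 0 < p₁) (hp₂ : 0 < p₂)
    (hq₁ : 0 ≤ q₁) (hq₂ : 0 ≤ q₂) :
    q₁ ^ t * q₂ ^ s = p₁ ^ t * p₂ ^ s * ((q₁ / p₁) ^ t * (q₂ / p₂) ^ s) := by
  rw [Real.div_rpow hq₁ hp₁.le, Real.div_rpow hq₂ hp₂.le]
  field_simp

theorem rpow_mul_rpow_le_mul_add_div {t p₁ p₂ q₁ q₂ : ℝ} (ht0 : 0 ≤ t) (ht1 : t ≤ 1)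
    (hp₁ : 0 < p₁) (hp₂ : 0 < p₂) (hq₁ : 0 ≤ q₁) (hq₂ : 0 ≤ q₂) :
    q₁ ^ t * q₂ ^ (1 - t) ≤ p₁ ^ t * p₂ ^ (1 - t) * (t * (q₁ / p₁) + (1 - t) * (q₂ / p₂)) := by
  rw [rpow_mul_rpow_eq_mul_div_rpow hp₁ hp₂ hq₁ hq₂]
  gcongr
  exact Real.geom_mean_le_arith_mean2_weighted ht0 (sub_nonneg.2 ht1) (by positivity)
    (by positivity) (add_sub_cancel _ _)

theorem rpow_mul_rpow_lt_mul_add_div {t p₁ p₂ q₁ q₂ : ℝ} (ht0 : 0 < t) (ht1 : t < 1)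
    (hp₁ : 0 < p₁) (hp₂ : 0 < p₂) (hq₁ : 0 ≤ q₁) (hq₂ : 0 ≤ q₂) (hne : q₁ / p₁ ≠ q₂ / p₂) :
    q₁ ^ t * q₂ ^ (1 - t) < p₁ ^ t * p₂ ^ (1 - t) * (t * (q₁ / p₁) + (1 - t) * (q₂ / p₂)) := by
  rw [rpow_mul_rpow_eq_mul_div_rpow hp₁ hp₂ hq₁ hq₂]
  gcongr
  exact (Real.geom_mean_lt_arith_mean2_weighted_iff_of_pos ht0 (sub_pos.2 ht1) (by positivity)
    (by positivity) (add_sub_cancel _ _)).2 hne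

section GeomMean

variable {b : X → X → ℝ} {c : X → ℝ} {t : ℝ} {f₁ f₂ : X → ℝ}

def geomMean (t : ℝ) (f₁ f₂ : X → ℝ) : X → ℝ := fun x => f₁ x ^ t * f₂ x ^ (1 - t)

theorem geomMean_pos (h₁ : ∀ x, 0 < f₁ x) (h₂ : ∀ x, 0 < f₂ x) (x : X) :
    0 < geomMean t f₁ f₂ x :=
  mul_pos (Real.rpow_pos_of_pos (h₁ x) t) (Real.rpow_pos_of_pos (h₂ x) (1 - t))

theorem geomMean_vadd_div {A : Type*} [AddMonoid A] [AddAction A X] {f : X → ℝ}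
    {χ₁ χ₂ : A → ℝ} (hf₁ : ∀ x, 0 ≤ f₁ x) (hf₂ : ∀ x, 0 ≤ f₂ x)
    (hmul₁ : ∀ z x, f₁ (z +ᵥ x) = Real.exp (χ₁ z) * f₁ x)
    (hmul₂ : ∀ z x, f₂ (z +ᵥ x) = Real.exp (χ₂ z) * f₂ x)
    (hmul : ∀ z x, f (z +ᵥ x) = Real.exp (t * χ₁ z + (1 - t) * χ₂ z) * f x) (z : A) (x : X) :
    geomMean t f₁ f₂ (z +ᵥ x) / f (z +ᵥ x) = geomMean t f₁ f₂ x / f x := by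
  have hg : geomMean t f₁ f₂ (z +ᵥ x) =
      Real.exp (t * χ₁ z + (1 - t) * χ₂ z) * geomMean t f₁ f₂ x := by
    simp only [geomMean, hmul₁, hmul₂, Real.mul_rpow (Real.exp_nonneg _) (hf₁ x),
      Real.mul_rpow (Real.exp_nonneg _) (hf₂ x), ← Real.exp_mul, Real.exp_add]
    ring_nf
  rw [hg, hmul, mul_div_mul_left _ _ (Real.exp_ne_zero _)]

theorem inDom_geomMean (hb0 : ∀ x y, 0 ≤ b x y) (ht0 : 0 ≤ t) (ht1 : t ≤ 1)
    (hf₁ : ∀ x, 0 ≤ f₁ x) (hf₂ : ∀ x, 0 ≤ f₂ x) (h₁ : InDom b f₁) (h₂ : InDom b f₂) :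
    InDom b (geomMean t f₁ f₂) := fun x => by
  refine Summable.of_nonneg_of_le (fun y => mul_nonneg (hb0 x y) (abs_nonneg _)) (fun y => ?_)
    (((h₁ x).mul_left t).add ((h₂ x).mul_left (1 - t)))
  have hmean : geomMean t f₁ f₂ y ≤ t * f₁ y + (1 - t) * f₂ y :=
    Real.geom_mean_le_arith_mean2_weighted ht0 (sub_nonneg.2 ht1) (hf₁ y) (hf₂ y)
      (add_sub_cancel _ _)
  have hg : 0 ≤ geomMean t f₁ f₂ y :=
    mul_nonneg (Real.rpow_nonneg (hf₁ y) t) (Real.rpow_nonneg (hf₂ y) (1 - t))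
  rw [abs_of_nonneg (hf₁ y), abs_of_nonneg (hf₂ y), abs_of_nonneg hg]
  nlinarith [mul_le_mul_of_nonneg_left hmean (hb0 x y)]

variable {l₁ l₂ : ℝ}

theorem hasSum_schrodinger_geomMean_sub (hb0 : ∀ x y, 0 ≤ b x y) (hbs : ∀ x, Summable (b x))
    (ht0 : 0 ≤ t) (ht1 : t ≤ 1) (hpos₁ : ∀ x, 0 < f₁ x) (hpos₂ : ∀ x, 0 < f₂ x)
    (h₁ : InDom b f₁) (h₂ : InDom b f₂) (hharm₁ : schrodinger b c f₁ = fun x => l₁ * f₁ x)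
    (hharm₂ : schrodinger b c f₂ = fun x => l₂ * f₂ x) (x : X) :
    HasSum (fun y => b x y * (geomMean t f₁ f₂ x * (t * (f₁ y / f₁ x) + (1 - t) * (f₂ y / f₂ x))
        - geomMean t f₁ f₂ y))
      (schrodinger b c (geomMean t f₁ f₂) x - (t * l₁ + (1 - t) * l₂) * geomMean t f₁ f₂ x) := by
  have hsg := (inDom_geomMean hb0 ht0 ht1 (fun x => (hpos₁ x).le) (fun x => (hpos₂ x).le) h₁
    h₂).summable_mul hb0 x
  set g := geomMean t f₁ f₂
  have hs₁ := h₁.summable_mul hb0 x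
  have hs₂ := h₂.summable_mul hb0 x
  have e₁ := congrFun hharm₁ x
  have e₂ := congrFun hharm₂ x
  rw [schrodinger_apply_eq_deg_sub (hbs x) hs₁] at e₁
  rw [schrodinger_apply_eq_deg_sub (hbs x) hs₂] at e₂
  have hsum := ((hs₁.hasSum.mul_left (t * g x / f₁ x)).add
    (hs₂.hasSum.mul_left ((1 - t) * g x / f₂ x))).sub hsg.hasSum
  have hterm : (fun y => b x y * (g x * (t * (f₁ y / f₁ x) + (1 - t) * (f₂ y / f₂ x)) - g y)) =
      fun y => t * g x / f₁ x * (b x y * f₁ y) + (1 - t) * g x / f₂ x * (b x y * f₂ y)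
        - b x y * g y := funext fun y => by ring
  have hval : schrodinger b c g x - (t * l₁ + (1 - t) * l₂) * g x =
      t * g x / f₁ x * ∑' y, b x y * f₁ y + (1 - t) * g x / f₂ x * ∑' y, b x y * f₂ y
        - ∑' y, b x y * g y := by
    have hS₁ : ∑' y, b x y * f₁ y = (deg b c x - l₁) * f₁ x := by linarith
    have hS₂ : ∑' y, b x y * f₂ y = (deg b c x - l₂) * f₂ x := by linarith
    rw [schrodinger_apply_eq_deg_sub (hbs x) hsg, hS₁, hS₂]
    field_simp [(hpos₁ x).ne', (hpos₂ x).ne']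
    ring
  rwa [hterm, hval]

theorem mul_geomMean_le_schrodinger (hb0 : ∀ x y, 0 ≤ b x y) (hbs : ∀ x, Summable (b x))
    (ht0 : 0 ≤ t) (ht1 : t ≤ 1) (hpos₁ : ∀ x, 0 < f₁ x) (hpos₂ : ∀ x, 0 < f₂ x)
    (h₁ : InDom b f₁) (h₂ : InDom b f₂) (hharm₁ : schrodinger b c f₁ = fun x => l₁ * f₁ x)
    (hharm₂ : schrodinger b c f₂ = fun x => l₂ * f₂ x) (x : X) :
    (t * l₁ + (1 - t) * l₂) * geomMean t f₁ f₂ x ≤ schrodinger b c (geomMean t f₁ f₂) x :=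
  sub_nonneg.1 <| (hasSum_schrodinger_geomMean_sub hb0 hbs ht0 ht1 hpos₁ hpos₂ h₁ h₂ hharm₁
    hharm₂ x).nonneg fun y => mul_nonneg (hb0 x y) <| sub_nonneg.2 <|
      rpow_mul_rpow_le_mul_add_div ht0 ht1 (hpos₁ x) (hpos₂ x) (hpos₁ y).le (hpos₂ y).le

theorem mul_geomMean_lt_schrodinger (hb0 : ∀ x y, 0 ≤ b x y) (hbs : ∀ x, Summable (b x))
    (ht0 : 0 < t) (ht1 : t < 1) (hpos₁ : ∀ x, 0 < f₁ x) (hpos₂ : ∀ x, 0 < f₂ x)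
    (h₁ : InDom b f₁) (h₂ : InDom b f₂) (hharm₁ : schrodinger b c f₁ = fun x => l₁ * f₁ x)
    (hharm₂ : schrodinger b c f₂ = fun x => l₂ * f₂ x) {x y : X} (hy : 0 < b x y)
    (hne : f₁ y / f₁ x ≠ f₂ y / f₂ x) :
    (t * l₁ + (1 - t) * l₂) * geomMean t f₁ f₂ x < schrodinger b c (geomMean t f₁ f₂) x := by
  have hs := hasSum_schrodinger_geomMean_sub hb0 hbs ht0.le ht1.le hpos₁ hpos₂ h₁ h₂ hharm₁
    hharm₂ x
  rw [← sub_pos, ← hs.tsum_eq]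
  refine hs.summable.tsum_pos (fun y' => ?_) y ?_
  · exact mul_nonneg (hb0 x y') <| sub_nonneg.2 <| rpow_mul_rpow_le_mul_add_div ht0.le ht1.le
      (hpos₁ x) (hpos₂ x) (hpos₁ y').le (hpos₂ y').le
  · exact mul_pos hy <| sub_pos.2 <| rpow_mul_rpow_lt_mul_add_div ht0 ht1 (hpos₁ x) (hpos₂ x)
      (hpos₁ y).le (hpos₂ y).le hne

theorem div_eq_div_of_schrodinger_geomMean_eq (hb0 : ∀ x y, 0 ≤ b x y)
    (hbs : ∀ x, Summable (b x)) (ht0 : 0 < t) (ht1 : t < 1) (hpos₁ : ∀ x, 0 < f₁ x)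
    (hpos₂ : ∀ x, 0 < f₂ x) (h₁ : InDom b f₁) (h₂ : InDom b f₂)
    (hharm₁ : schrodinger b c f₁ = fun x => l₁ * f₁ x)
    (hharm₂ : schrodinger b c f₂ = fun x => l₂ * f₂ x)
    (hharm : ∀ x, schrodinger b c (geomMean t f₁ f₂) x =
      (t * l₁ + (1 - t) * l₂) * geomMean t f₁ f₂ x)
    {x y : X} (hy : 0 < b x y) : f₁ y / f₁ x = f₂ y / f₂ x :=
  not_not.1 fun hne => (mul_geomMean_lt_schrodinger hb0 hbs ht0 ht1 hpos₁ hpos₂ h₁ h₂ hharm₁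
    hharm₂ hy hne).ne (hharm x).symm

end GeomMean

theorem exists_forall_le_of_vadd_invariant {A α : Type*} [AddMonoid A] [AddAction A X]
    [LinearOrder α] [Nonempty X] {u : X → α}
    (hcocpt : ∃ V : Finset X, ∀ x : X, ∃ z : A, ∃ v ∈ V, x = z +ᵥ v)
    (hu : ∀ (z : A) (x : X), u (z +ᵥ x) = u x) : ∃ w, ∀ x, u w ≤ u x := by
  obtain ⟨V, hV⟩ := hcocpt
  obtain ⟨-, v, hv, -⟩ := hV (Classical.arbitrary X)
  obtain ⟨w, -, hw⟩ := V.exists_min_image u ⟨v, hv⟩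
  refine ⟨w, fun x => ?_⟩
  obtain ⟨z, v, hv, rfl⟩ := hV x
  exact (hw v hv).trans_eq (hu z v).symm

theorem eq_of_forall_sum_mul_intCast_eq {d : ℕ} {α β : Fin d → ℝ}
    (h : ∀ z : Fin d → ℤ, ∑ k, α k * (z k : ℝ) = ∑ k, β k * (z k : ℝ)) : α = β :=
  funext fun k => by simpa [Pi.single_apply] using h (Pi.single k 1)

theorem eigenvalue_strictly_concave_general {X : Type*} {d : ℕ}
    [AddAction (Fin d → ℤ) X]
    (b : X → X → ℝ) (c : X → ℝ)
    (hb0 : ∀ x y, 0 ≤ b x y) (hbs : ∀ x, Summable (b x))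
    (hconn : Connected b)
    (hcocpt : ∃ V : Finset X, ∀ x : X, ∃ z : Fin d → ℤ, ∃ v ∈ V, x = z +ᵥ v)
    (x₀ : X) (α₁ α₂ : Fin d → ℝ) (hα : α₁ ≠ α₂) (t : ℝ) (ht0 : 0 < t) (ht1 : t < 1)
    (l₁ l₂ l : ℝ) (f₁ f₂ f : X → ℝ)
    (hdom₁ : InDom b f₁) (hpos₁ : ∀ x, 0 < f₁ x) (hn₁ : f₁ x₀ = 1)
    (hharm₁ : schrodinger b c f₁ = fun x => l₁ * f₁ x)
    (hmul₁ : ∀ (z : Fin d → ℤ) (x : X),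
      f₁ (z +ᵥ x) = Real.exp (∑ k, α₁ k * (z k : ℝ)) * f₁ x)
    (hdom₂ : InDom b f₂) (hpos₂ : ∀ x, 0 < f₂ x) (hn₂ : f₂ x₀ = 1)
    (hharm₂ : schrodinger b c f₂ = fun x => l₂ * f₂ x)
    (hmul₂ : ∀ (z : Fin d → ℤ) (x : X),
      f₂ (z +ᵥ x) = Real.exp (∑ k, α₂ k * (z k : ℝ)) * f₂ x)
    (hdom : InDom b f) (hpos : ∀ x, 0 < f x)
    (hharm : schrodinger b c f = fun x => l * f x)
    (hmul : ∀ (z : Fin d → ℤ) (x : X),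
      f (z +ᵥ x) = Real.exp (∑ k, (t * α₁ k + (1 - t) * α₂ k) * (z k : ℝ)) * f x) :
    t * l₁ + (1 - t) * l₂ < l := by
  set g := geomMean t f₁ f₂
  have hg : InDom b g := inDom_geomMean hb0 ht0.le ht1.le (fun x => (hpos₁ x).le)
    (fun x => (hpos₂ x).le) hdom₁ hdom₂
  have hsuper : ∀ x, (t * l₁ + (1 - t) * l₂) * g x ≤ schrodinger b c g x :=
    mul_geomMean_le_schrodinger hb0 hbs ht0.le ht1.le hpos₁ hpos₂ hdom₁ hdom₂ hharm₁ hharm₂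
  have hinv : ∀ (z : Fin d → ℤ) (x : X), g (z +ᵥ x) / f (z +ᵥ x) = g x / f x :=
    geomMean_vadd_div (fun x => (hpos₁ x).le) (fun x => (hpos₂ x).le) hmul₁ hmul₂ fun z x => by
      simp only [hmul, Finset.mul_sum, ← Finset.sum_add_distrib, add_mul, mul_assoc]
  have : Nonempty X := ⟨x₀⟩
  obtain ⟨w, hw⟩ := exists_forall_le_of_vadd_invariant (u := fun x => g x / f x) hcocpt hinv
  have hle : t * l₁ + (1 - t) * l₂ ≤ l := by
    refine le_of_mul_le_mul_right ?_ (geomMean_pos (t := t) hpos₁ hpos₂ w)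
    exact (hsuper w).trans (schrodinger_le_mul_of_forall_div_le hb0 hbs hpos hdom hg hharm hw)
  refine hle.lt_of_ne fun heq => hα (eq_of_forall_sum_mul_intCast_eq fun z => ?_)
  subst heq
  have hg_harm : schrodinger b c g = fun x => (t * l₁ + (1 - t) * l₂) * g x := by
    rw [funext (hconn.eq_const_mul_of_forall_div_le hb0 hbs hpos hdom hg hharm hsuper hw),
      schrodinger_const_mul, hharm]
    ring_nf
  have hf₁₂ : f₁ = f₂ := hconn.eq_of_div_eq_div (hn₁.trans hn₂.symm)
    (fun _ _ => div_eq_div_of_schrodinger_geomMean_eq hb0 hbs ht0 ht1 hpos₁ hpos₂ hdom₁ hdom₂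
      hharm₁ hharm₂ (congrFun hg_harm))
    (fun x => (hpos₁ x).ne')
  have hz := congrFun hf₁₂ (z +ᵥ x₀)
  rwa [hmul₁, hmul₂, hn₁, hn₂, mul_one, mul_one, Real.exp_eq_exp] at hz

/-- The eigenvalue as a function of the character exponent is strictly
concave. -/
theorem eigenvalue_strictly_concave {X : Type*} [Countable X] {d : ℕ}
    [AddAction (Fin d → ℤ) X]
    (b : X → X → ℝ) (c : X → ℝ)
    (hb0 : ∀ x y, 0 ≤ b x y) (hbd : ∀ x, b x x = 0) (hbs : ∀ x, Summable (b x))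
    (hlf : ∀ x : X, {y | 0 < b x y}.Finite) (hconn : Connected b)
    (hfree : ∀ (z : Fin d → ℤ) (x : X), z +ᵥ x = x → z = 0)
    (hcocpt : ∃ V : Finset X, ∀ x : X, ∃ z : Fin d → ℤ, ∃ v ∈ V, x = z +ᵥ v)
    (hbinv : ∀ (z : Fin d → ℤ) (x y : X), b (z +ᵥ x) (z +ᵥ y) = b x y)
    (hcinv : ∀ (z : Fin d → ℤ) (x : X), c (z +ᵥ x) = c x)
    (x₀ : X) (α₁ α₂ : Fin d → ℝ) (hα : α₁ ≠ α₂) (t : ℝ) (ht0 : 0 < t) (ht1 : t < 1)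
    (l₁ l₂ l : ℝ) (f₁ f₂ f : X → ℝ)
    (hdom₁ : InDom b f₁) (hpos₁ : ∀ x, 0 < f₁ x) (hn₁ : f₁ x₀ = 1)
    (hharm₁ : schrodinger b c f₁ = fun x => l₁ * f₁ x)
    (hmul₁ : ∀ (z : Fin d → ℤ) (x : X),
      f₁ (z +ᵥ x) = Real.exp (∑ k, α₁ k * (z k : ℝ)) * f₁ x)
    (hdom₂ : InDom b f₂) (hpos₂ : ∀ x, 0 < f₂ x) (hn₂ : f₂ x₀ = 1)
    (hharm₂ : schrodinger b c f₂ = fun x => l₂ * f₂ x)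
    (hmul₂ : ∀ (z : Fin d → ℤ) (x : X),
      f₂ (z +ᵥ x) = Real.exp (∑ k, α₂ k * (z k : ℝ)) * f₂ x)
    (hdom : InDom b f) (hpos : ∀ x, 0 < f x) (hn : f x₀ = 1)
    (hharm : schrodinger b c f = fun x => l * f x)
    (hmul : ∀ (z : Fin d → ℤ) (x : X),
      f (z +ᵥ x) = Real.exp (∑ k, (t * α₁ k + (1 - t) * α₂ k) * (z k : ℝ)) * f x) :
    t * l₁ + (1 - t) * l₂ < l :=
  eigenvalue_strictly_concave_general b c hb0 hbs hconn hcocpt x₀ α₁ α₂ hα t ht0 ht1 l₁ l₂ l f₁ f₂ f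
    hdom₁ hpos₁ hn₁ hharm₁ hmul₁ hdom₂ hpos₂ hn₂ hharm₂ hmul₂ hdom hpos hharm hmul

end GraphPaper
end
end
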